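/- arXiv:math/0509330 — 16 statements merged into one kernel-verified Lean document; each statement's English description precedes it below -/
import Mathlib

section
/- Let H be a complex Hilbert space, A a bounded positive operator on H, and S a closed subspace of H. Let Q be a bounded projection on H with range S. Then AQ = Q*A if and only if the kernel of Q is contained in A^{-1}(S^⊥) = {x ∈ H : ⟨Ax, s⟩ = 0 for all s ∈ S}. -/
open scoped InnerProductSpace
open ContinuousLinearMap

/-- Krein's lemma: a bounded projection `Q` with range `S` is `A`-Hermitian
(`AQ = Q*A`) iff its kernel is contained in `A⁻¹(S^⊥) = {x | ⟪Ax, s⟫ = 0 ∀ s ∈ S}`. -/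
theorem krein_lemma {H : Type*} [NormedAddCommGroup H] [InnerProductSpace ℂ H]
    [CompleteSpace H] (A Q : H →L[ℂ] H) (hA : A.IsPositive)
    (S : Submodule ℂ H) (hS : IsClosed (S : Set H))
    (hQ : Q ∘L Q = Q) (hQS : LinearMap.range (Q : H →ₗ[ℂ] H) = S) :
    A ∘L Q = (adjoint Q) ∘L A ↔
      (LinearMap.ker (Q : H →ₗ[ℂ] H) : Set H) ⊆ {x : H | ∀ s ∈ S, ⟪A x, s⟫_ℂ = 0} := by
  have hQfix : ∀ s ∈ S, Q s = s := by
    intro s hs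
    rw [← hQS] at hs
    obtain ⟨y, rfl⟩ := hs
    have := congrFun (congrArg DFunLike.coe hQ) y
    simpa using this
  have hAsa : ContinuousLinearMap.adjoint A = A := hA.isSelfAdjoint.adjoint_eq
  constructor
  · intro h x hx s hs
    have hx' : Q x = 0 := hx
    have h1 : ⟪A x, s⟫_ℂ = ⟪A x, Q s⟫_ℂ := by rw [hQfix s hs]
    rw [h1, ← ContinuousLinearMap.adjoint_inner_left]
    have h2 : (ContinuousLinearMap.adjoint Q) (A x) = A (Q x) := by
      have := congrFun (congrArg DFunLike.coe h.symm) x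
      simpa using this
    rw [h2, hx', map_zero, inner_zero_left]
  · intro h
    ext x
    refine ext_inner_right ℂ ?_
    intro y
    have hk : x - Q x ∈ LinearMap.ker (Q : H →ₗ[ℂ] H) := by
      have := congrFun (congrArg DFunLike.coe hQ) x
      simp only [ContinuousLinearMap.comp_apply] at this
      simp [LinearMap.mem_ker, this]
    have hk' : y - Q y ∈ LinearMap.ker (Q : H →ₗ[ℂ] H) := by
      have := congrFun (congrArg DFunLike.coe hQ) y
      simp only [ContinuousLinearMap.comp_apply] at this
      simp [LinearMap.mem_ker, this]
    have hQx : Q x ∈ S := hQS ▸ LinearMap.mem_range_self Q.toLinearMap x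
    have hQy : Q y ∈ S := hQS ▸ LinearMap.mem_range_self Q.toLinearMap y
    have selfadj : ∀ u v : H, ⟪A u, v⟫_ℂ = ⟪u, A v⟫_ℂ := by
      intro u v
      rw [← hAsa, ContinuousLinearMap.adjoint_inner_left, hAsa]
    have e1 : ⟪A (Q x), y - Q y⟫_ℂ = 0 := by
      rw [selfadj, ← inner_conj_symm, h hk' (Q x) hQx, map_zero]
    have e2 : ⟪A (x - Q x), Q y⟫_ℂ = 0 := h hk (Q y) hQy
    simp only [ContinuousLinearMap.comp_apply, ContinuousLinearMap.adjoint_inner_left]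
    simp only [inner_sub_right, sub_eq_zero] at e1
    simp only [map_sub, inner_sub_left, sub_eq_zero] at e2
    rw [e1]
    exact e2.symm
end

section
/- Let H be a Hilbert space, A a bounded positive operator, and S a closed subspace. The pair (A,S) is compatible (i.e., there exists a bounded projection Q with range S and AQ = Q*A) if and only if H = S + A^{-1}(S^⊥). -/
open scoped InnerProductSpace
open ContinuousLinearMap

/-- The pair `(A, S)` is compatible (there is a bounded projection `Q` with range `S`
and `AQ = Q*A`) iff `H = S + A⁻¹(S^⊥)`. -/
theorem compatible_iff_sum_eq_top {H : Type*} [NormedAddCommGroup H]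
    [InnerProductSpace ℂ H] [CompleteSpace H] (A : H →L[ℂ] H) (hA : A.IsPositive)
    (S : Submodule ℂ H) (hS : IsClosed (S : Set H)) :
    (∃ Q : H →L[ℂ] H, Q ∘L Q = Q ∧ LinearMap.range (Q : H →ₗ[ℂ] H) = S ∧
        A ∘L Q = (adjoint Q) ∘L A) ↔
      S ⊔ Sᗮ.comap (A : H →ₗ[ℂ] H) = ⊤ := by
  have hAsa : ∀ x y : H, ⟪A x, y⟫_ℂ = ⟪x, A y⟫_ℂ := by
    intro x y
    have := hA.isSelfAdjoint
    rw [ContinuousLinearMap.isSelfAdjoint_iff_isSymmetric] at this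
    exact this x y
  constructor
  · rintro ⟨Q, hQ2, hQr, hQA⟩
    rw [eq_top_iff]
    intro x _
    have hx : x = Q x + (x - Q x) := by abel
    refine hx ▸ Submodule.add_mem_sup (hQr ▸ LinearMap.mem_range_self (Q : H →ₗ[ℂ] H) x) ?_
    simp only [Submodule.mem_comap, Submodule.mem_orthogonal]
    intro u hu
    obtain ⟨w, rfl⟩ := hQr ▸ hu
    have h1 : adjoint Q (A (x - Q x)) = A (Q (x - Q x)) := by
      have := congrFun (congrArg (fun (T : H →L[ℂ] H) => (T : H → H)) hQA) (x - Q x)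
      simpa using this.symm
    have h2 : Q (x - Q x) = 0 := by
      have := congrFun (congrArg (fun (T : H →L[ℂ] H) => (T : H → H)) hQ2) x
      simp only [ContinuousLinearMap.comp_apply] at this
      simp [map_sub, this]
    calc ⟪Q w, A (x - Q x)⟫_ℂ = ⟪w, adjoint Q (A (x - Q x))⟫_ℂ := by
          rw [ContinuousLinearMap.adjoint_inner_right]
      _ = 0 := by rw [h1, h2]; simp
  · intro htop
    set T : Submodule ℂ H := Sᗮ.comap (A : H →ₗ[ℂ] H) with hT
    have hTc : IsClosed (T : Set H) := S.isClosed_orthogonal.preimage A.continuous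
    set N : Submodule ℂ H := S ⊓ T with hN
    have hNc : IsClosed (N : Set H) := hS.inter hTc
    haveI : CompleteSpace N := hNc.completeSpace_coe
    set M : Submodule ℂ H := T ⊓ Nᗮ with hM
    have hMc : IsClosed (M : Set H) := hTc.inter N.isClosed_orthogonal
    have hMT : M ≤ T := inf_le_left
    have hcompl : IsCompl S M := by
      constructor
      · rw [Submodule.disjoint_def]
        intro x hxS hxM
        have hxN : x ∈ N := ⟨hxS, hxM.1⟩
        have := hxM.2
        have : ⟪x, x⟫_ℂ = 0 := this x hxN
        simpa using inner_self_eq_zero.mp this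
      · rw [codisjoint_iff, eq_top_iff, ← htop]
        apply sup_le le_sup_left
        intro y hy
        have hdec : y = (N.orthogonalProjection y : H) + (y - N.orthogonalProjection y) := by
          abel
        have h1 : (N.orthogonalProjection y : H) ∈ S := (N.orthogonalProjection y).2.1
        have h2 : y - N.orthogonalProjection y ∈ M := by
          constructor
          · exact Submodule.sub_mem T hy (N.orthogonalProjection y).2.2
          · exact N.sub_starProjection_mem_orthogonal y
        exact hdec ▸ Submodule.add_mem_sup h1 h2
    set P := S.linearProjOfClosedCompl M hcompl hS hMc with hP
    set Q : H →L[ℂ] H := S.subtypeL ∘L P with hQ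
    have hQapply : ∀ x : H, Q x = (S.linearProjOfIsCompl M hcompl x : H) := fun x => rfl
    have hQmem : ∀ x : H, Q x ∈ S := fun x => (S.linearProjOfIsCompl M hcompl x).2
    have hQleft : ∀ x : H, x ∈ S → Q x = x := by
      intro x hx
      rw [hQapply]
      have := Submodule.linearProjOfIsCompl_apply_left hcompl ⟨x, hx⟩
      exact congrArg Subtype.val this
    have hQsub : ∀ x : H, x - Q x ∈ M := by
      intro x
      rw [hQapply]
      have h1 : (S.linearProjOfIsCompl M hcompl x : H) + (M.linearProjOfIsCompl S hcompl.symm x : H) = x :=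
        Submodule.projection_add_projection_eq_self hcompl x
      have h2 : x - (S.linearProjOfIsCompl M hcompl x : H)
          = (M.linearProjOfIsCompl S hcompl.symm x : H) :=
        sub_eq_of_eq_add' h1.symm
      rw [h2]
      exact (M.linearProjOfIsCompl S hcompl.symm x).2
    refine ⟨Q, ?_, ?_, ?_⟩
    · ext x
      exact hQleft (Q x) (hQmem x)
    · apply le_antisymm
      · rintro _ ⟨x, rfl⟩; exact hQmem x
      · intro x hx
        exact ⟨x, hQleft x hx⟩
    · -- A ∘ Q is self-adjoint, hence adjoint Q ∘ A = adjoint Q ∘ adjoint A = adjoint (A∘Q) = A∘Q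
      have hsym : ∀ x y : H, ⟪A (Q x), y⟫_ℂ = ⟪x, A (Q y)⟫_ℂ := by
        intro x y
        have hx : ∀ z w : H, z ∈ S → w ∈ M → ⟪A z, w⟫_ℂ = 0 := by
          intro z w hz hw
          rw [hAsa]
          exact (Submodule.mem_orthogonal _ _).mp (hMT hw) z hz
        have e1 : ⟪A (Q x), y⟫_ℂ = ⟪A (Q x), Q y⟫_ℂ := by
          have h0 : ⟪A (Q x), y - Q y⟫_ℂ = 0 := hx (Q x) (y - Q y) (hQmem x) (hQsub y)
          refine sub_eq_zero.mp ?_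
          rw [← inner_sub_right]; exact h0
        have e2 : ⟪x, A (Q y)⟫_ℂ = ⟪Q x, A (Q y)⟫_ℂ := by
          have h0 : ⟪x - Q x, A (Q y)⟫_ℂ = 0 := by
            rw [← inner_conj_symm, hx (Q y) (x - Q x) (hQmem y) (hQsub x), map_zero]
          refine sub_eq_zero.mp ?_
          rw [← inner_sub_left]; exact h0
        rw [e1, e2, hAsa]
      have hsa : IsSelfAdjoint (A ∘L Q) := by
        rw [ContinuousLinearMap.isSelfAdjoint_iff_isSymmetric]
        intro x y
        exact hsym x y
      have hAsa' : adjoint A = A := hA.isSelfAdjoint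
      calc A ∘L Q = adjoint (A ∘L Q) := hsa.symm
        _ = adjoint Q ∘L adjoint A := by rw [ContinuousLinearMap.adjoint_comp]
        _ = adjoint Q ∘L A := by rw [hAsa']
end

section
/- Let A be a bounded positive operator on H and S a closed subspace. If (A,S) is compatible (H = S + A^{-1}(S^⊥)), then A(S) is closed in R(A), i.e., the closure of A(S) intersected with R(A) equals A(S). -/
/-!
Compatibility gives `R(A) = A(S) + A(A⁻¹(S^⊥))`. If `A t ∈ S^⊥`, then `t ⊥ A(S)` by symmetry of
`A`, hence `t` is orthogonal to the closure of `A(S)`; if moreover `A t` lies in that closure, then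
`⟪A t, t⟫ = 0`, which forces `A t = 0` because `A = √A √A`. So `A(A⁻¹(S^⊥))` meets the closure of
`A(S)` only in `0`, and the modular law for submodules turns
`closure A(S) ⊓ (A(S) ⊔ A(A⁻¹(S^⊥)))` into `A(S)`.
-/

open scoped InnerProductSpace

theorem LinearMap.IsSymmetric.orthogonal_map {𝕜 E : Type*} [RCLike 𝕜] [NormedAddCommGroup E]
    [InnerProductSpace 𝕜 E] {T : E →ₗ[𝕜] E} (hT : T.IsSymmetric) (K : Submodule 𝕜 E) :
    (K.map T)ᗮ = Kᗮ.comap T := by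
  ext x
  simp only [Submodule.mem_orthogonal, Submodule.mem_comap, Submodule.mem_map,
    forall_exists_index, and_imp, forall_apply_eq_imp_iff₂, hT _ x]

namespace ContinuousLinearMap

variable {H : Type*} [NormedAddCommGroup H] [InnerProductSpace ℂ H] [CompleteSpace H]
  {A : H →L[ℂ] H}

theorem IsPositive.apply_eq_zero_of_inner_self_eq_zero (hA : A.IsPositive) {x : H}
    (h : ⟪A x, x⟫_ℂ = 0) : A x = 0 := by
  have hA₀ : 0 ≤ A := (nonneg_iff_isPositive A).mpr hA
  set B := CFC.sqrt A
  have hBB : A x = B (B x) := by rw [← CFC.sqrt_mul_sqrt_self A hA₀]; rfl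
  have hB : IsSelfAdjoint B := IsSelfAdjoint.of_nonneg (CFC.sqrt_nonneg A)
  have hBx : B x = 0 := by
    have hsymm : ⟪B (B x), x⟫_ℂ = ⟪B x, B x⟫_ℂ := hB.isSymmetric (B x) x
    rwa [← inner_self_eq_zero (𝕜 := ℂ), ← hsymm, ← hBB]
  rw [hBB, hBx, map_zero]

theorem IsPositive.disjoint_map_comap_orthogonal_closure_map (hA : A.IsPositive)
    (S : Submodule ℂ H) :
    Disjoint ((Sᗮ.comap (A : H →ₗ[ℂ] H)).map (A : H →ₗ[ℂ] H))
      (S.map (A : H →ₗ[ℂ] H)).topologicalClosure := by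
  rw [Submodule.disjoint_def]
  rintro _ ⟨x, hx, rfl⟩ hAx
  rw [← hA.isSymmetric.orthogonal_map, ← Submodule.orthogonal_closure] at hx
  exact hA.apply_eq_zero_of_inner_self_eq_zero (hx _ hAx)

end ContinuousLinearMap

theorem map_closed_in_range_of_compatible_general {H : Type*} [NormedAddCommGroup H]
    [InnerProductSpace ℂ H] [CompleteSpace H] (A : H →L[ℂ] H) (hA : A.IsPositive)
    (S : Submodule ℂ H)
    (hcompat : S ⊔ Sᗮ.comap (A : H →ₗ[ℂ] H) = ⊤) :
    (S.map (A : H →ₗ[ℂ] H)).topologicalClosure ⊓ LinearMap.range (A : H →ₗ[ℂ] H) = S.map (A : H →ₗ[ℂ] H) := by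
  rw [LinearMap.range_eq_map, ← hcompat, Submodule.map_sup, inf_comm,
    sup_inf_assoc_of_le _ (Submodule.le_topologicalClosure _),
    (hA.disjoint_map_comap_orthogonal_closure_map S).eq_bot, sup_bot_eq]

/-- If `(A, S)` is compatible (`H = S + A⁻¹(S^⊥)`), then `A(S)` is closed in `R(A)`:
`closure (A S) ∩ R(A) = A S`. -/
theorem map_closed_in_range_of_compatible {H : Type*} [NormedAddCommGroup H]
    [InnerProductSpace ℂ H] [CompleteSpace H] (A : H →L[ℂ] H) (hA : A.IsPositive)
    (S : Submodule ℂ H) (hS : IsClosed (S : Set H))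
    (hcompat : S ⊔ Sᗮ.comap (A : H →ₗ[ℂ] H) = ⊤) :
    (S.map (A : H →ₗ[ℂ] H)).topologicalClosure ⊓ LinearMap.range (A : H →ₗ[ℂ] H) = S.map (A : H →ₗ[ℂ] H) :=
  map_closed_in_range_of_compatible_general A hA S hcompat
end

section
/- Let A be a bounded positive operator on H and S a closed subspace. If the closure of A(S) intersected with R(A) equals A(S), then the closure of A^{1/2}(S) intersected with R(A^{1/2}) equals A^{1/2}(S). -/
open scoped InnerProductSpace
open ContinuousLinearMap

/-- If `closure (A S) ∩ R(A) = A S` then `closure (A^{1/2} S) ∩ R(A^{1/2}) = A^{1/2} S`,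
where `sq` denotes the positive square root `A^{1/2}` of `A`. -/
theorem sqrt_map_closed_in_range {H : Type*} [NormedAddCommGroup H]
    [InnerProductSpace ℂ H] [CompleteSpace H] (A sq : H →L[ℂ] H)
    (hA : A.IsPositive) (hsq : sq.IsPositive) (hsq2 : sq ∘L sq = A)
    (S : Submodule ℂ H) (hS : IsClosed (S : Set H))
    (h : (S.map (A : H →ₗ[ℂ] H)).topologicalClosure ⊓ LinearMap.range (A : H →ₗ[ℂ] H) =
      S.map (A : H →ₗ[ℂ] H)) :
    (S.map (sq : H →ₗ[ℂ] H)).topologicalClosure ⊓ LinearMap.range (sq : H →ₗ[ℂ] H) =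
      S.map (sq : H →ₗ[ℂ] H) := by
  have hsym := hsq.isSelfAdjoint.isSymmetric
  refine le_antisymm ?_ (le_inf (Submodule.le_topologicalClosure _)
    (fun x hx => by rcases hx with ⟨s, _, rfl⟩; exact ⟨s, rfl⟩))
  rintro x ⟨hx1, y, rfl⟩
  -- sq (sq y) ∈ closure (A S)
  have hmapsTo : Set.MapsTo sq (S.map (sq : H →ₗ[ℂ] H) : Set H) (S.map (A : H →ₗ[ℂ] H) : Set H) := by
    rintro z ⟨s, hs, rfl⟩
    exact ⟨s, hs, by rw [← hsq2]; rfl⟩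
  have h1 : sq (sq y) ∈ (S.map (A : H →ₗ[ℂ] H)).topologicalClosure :=
    map_mem_closure sq.continuous hx1 hmapsTo
  have h2 : sq (sq y) ∈ LinearMap.range (A : H →ₗ[ℂ] H) := ⟨y, by rw [← hsq2]; rfl⟩
  have h3 : sq (sq y) ∈ S.map (A : H →ₗ[ℂ] H) := h ▸ ⟨h1, h2⟩
  rcases h3 with ⟨s, hs, hAs⟩
  -- sq (sq y - sq s) = 0
  have hker : sq (sq y - sq s) = 0 := by
    have : A s = sq (sq s) := by rw [← hsq2]; rfl
    rw [map_sub, ← this, ← ContinuousLinearMap.coe_coe A, hAs, sub_self]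
  have hzero : sq y - sq s = 0 := by
    have : ⟪sq y - sq s, sq y - sq s⟫_ℂ = 0 := by
      have := hsym (y - s) (sq y - sq s)
      simp only [ContinuousLinearMap.coe_coe, map_sub] at this
      rw [this, ← map_sub, hker, inner_zero_right]
    exact inner_self_eq_zero.mp this
  have : sq y = sq s := by rwa [sub_eq_zero] at hzero
  exact ⟨s, hs, this.symm⟩
end

section
/- Let A be a bounded positive operator on H and S a closed subspace. Then A(S) is closed in R(A) (i.e., closure(A(S)) ∩ R(A) = A(S)) if and only if A^{-1}(closure(A(S))) = S + N(A). -/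
open scoped InnerProductSpace
open ContinuousLinearMap

/-- `A(S)` is closed in `R(A)` (`closure (A S) ∩ R(A) = A S`)
iff `A⁻¹(closure (A S)) = S + N(A)`. -/
theorem map_closed_in_range_iff_comap {H : Type*} [NormedAddCommGroup H]
    [InnerProductSpace ℂ H] [CompleteSpace H] (A : H →L[ℂ] H) (hA : A.IsPositive)
    (S : Submodule ℂ H) (hS : IsClosed (S : Set H)) :
    (S.map (A : H →ₗ[ℂ] H)).topologicalClosure ⊓ LinearMap.range (A : H →ₗ[ℂ] H) = S.map (A : H →ₗ[ℂ] H) ↔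
      ((S.map (A : H →ₗ[ℂ] H)).topologicalClosure).comap (A : H →ₗ[ℂ] H) = S ⊔ LinearMap.ker (A : H →ₗ[ℂ] H) := by
  constructor
  · intro h
    apply le_antisymm
    · intro x hx
      have hmem : (A : H →ₗ[ℂ] H) x ∈ (S.map (A : H →ₗ[ℂ] H)).topologicalClosure ⊓ LinearMap.range (A : H →ₗ[ℂ] H) :=
        ⟨hx, ⟨x, rfl⟩⟩
      rw [h] at hmem
      obtain ⟨s, hs, hsx⟩ := hmem
      have hk : x - s ∈ LinearMap.ker (A : H →ₗ[ℂ] H) := by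
        simp [LinearMap.mem_ker, map_sub, hsx]
      have := Submodule.add_mem_sup hs hk
      simpa using this
    · apply sup_le
      · intro s hs
        exact Submodule.le_topologicalClosure _ (Submodule.mem_map_of_mem hs)
      · intro k hk
        simp only [Submodule.mem_comap]
        rw [LinearMap.mem_ker] at hk
        simp only [coe_coe, hk]
        exact Submodule.zero_mem _
  · intro h
    apply le_antisymm
    · rintro y ⟨hy, x, rfl⟩
      have hx : x ∈ S ⊔ LinearMap.ker (A : H →ₗ[ℂ] H) := by rw [← h]; exact hy
      obtain ⟨s, hs, k, hk, rfl⟩ := Submodule.mem_sup.mp hx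
      refine ⟨s, hs, ?_⟩
      simp only [LinearMap.mem_ker, coe_coe] at hk
      simp [hk]
    · exact le_inf (Submodule.le_topologicalClosure _)
        (fun y hy => by obtain ⟨x, _, rfl⟩ := hy; exact ⟨x, rfl⟩)
end

section
/- Let A be a bounded positive operator on H and S a closed subspace. If closure(A^{1/2}(S)) ∩ R(A^{1/2}) = A^{1/2}(S), then S + N(A) is closed in H. -/
/-!
Since `R(A^{1/2}) = A^{1/2}(H)`, the hypothesis says that the preimage of the closed subspace
`closure (A^{1/2}(S))` under `A^{1/2}` equals the preimage of `A^{1/2}(S)`, which is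
`S + N(A^{1/2}) = S + N(A)`. A preimage of a closed set under a bounded operator is closed.
-/

theorem Submodule.comap_eq_sup_ker_of_inf_range_eq {R M N : Type*} [Ring R] [AddCommGroup M]
    [AddCommGroup N] [Module R M] [Module R N] (f : M →ₗ[R] N) {p : Submodule R M}
    {q : Submodule R N} (h : q ⊓ LinearMap.range f = p.map f) :
    q.comap f = p ⊔ LinearMap.ker f := by
  rw [← Submodule.comap_map_eq, ← h, Submodule.comap_inf,
    LinearMap.range_le_iff_comap.mp le_rfl, inf_top_eq]

theorem ContinuousLinearMap.isClosed_sup_ker_of_closure_inf_range_eq {R M N : Type*} [Ring R]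
    [AddCommGroup M] [AddCommGroup N] [Module R M] [Module R N] [TopologicalSpace M]
    [TopologicalSpace N] [ContinuousAdd N] [ContinuousConstSMul R N] (f : M →L[R] N)
    {p : Submodule R M}
    (h : (p.map (f : M →ₗ[R] N)).topologicalClosure ⊓ LinearMap.range (f : M →ₗ[R] N) =
      p.map (f : M →ₗ[R] N)) :
    IsClosed ((p ⊔ LinearMap.ker (f : M →ₗ[R] N) : Submodule R M) : Set M) := by
  rw [← Submodule.comap_eq_sup_ker_of_inf_range_eq _ h]
  exact (p.map (f : M →ₗ[R] N)).isClosed_topologicalClosure.preimage f.continuous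

theorem IsSelfAdjoint.ker_comp_self {𝕜 E : Type*} [RCLike 𝕜] [NormedAddCommGroup E]
    [InnerProductSpace 𝕜 E] [CompleteSpace E] {T : E →L[𝕜] E} (hT : IsSelfAdjoint T) :
    (T ∘L T).ker = T.ker := by
  simpa [hT.adjoint_eq] using T.ker_adjoint_comp_self

theorem sum_kernel_closed_general {H : Type*} [NormedAddCommGroup H]
    [InnerProductSpace ℂ H] [CompleteSpace H] (A sq : H →L[ℂ] H)
    (hsq : sq.IsPositive) (hsq2 : sq ∘L sq = A)
    (S : Submodule ℂ H)
    (h : (S.map (sq : H →ₗ[ℂ] H)).topologicalClosure ⊓ LinearMap.range (sq : H →ₗ[ℂ] H) = S.map (sq : H →ₗ[ℂ] H)) :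
    IsClosed ((S ⊔ LinearMap.ker (A : H →ₗ[ℂ] H) : Submodule ℂ H) : Set H) := by
  have hker : LinearMap.ker (A : H →ₗ[ℂ] H) = LinearMap.ker (sq : H →ₗ[ℂ] H) := by
    rw [← hsq2]
    exact hsq.isSelfAdjoint.ker_comp_self
  rw [hker]
  exact sq.isClosed_sup_ker_of_closure_inf_range_eq h

/-- If `closure (A^{1/2} S) ∩ R(A^{1/2}) = A^{1/2} S`, then `S + N(A)` is closed in `H`.
Here `sq` denotes the positive square root `A^{1/2}` of `A`. -/
theorem sum_kernel_closed {H : Type*} [NormedAddCommGroup H]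
    [InnerProductSpace ℂ H] [CompleteSpace H] (A sq : H →L[ℂ] H)
    (hA : A.IsPositive) (hsq : sq.IsPositive) (hsq2 : sq ∘L sq = A)
    (S : Submodule ℂ H) (hS : IsClosed (S : Set H))
    (h : (S.map (sq : H →ₗ[ℂ] H)).topologicalClosure ⊓ LinearMap.range (sq : H →ₗ[ℂ] H) = S.map (sq : H →ₗ[ℂ] H)) :
    IsClosed ((S ⊔ LinearMap.ker (A : H →ₗ[ℂ] H) : Submodule ℂ H) : Set H) :=
  sum_kernel_closed_general A sq hsq hsq2 S h
end

section
/- Let A be a bounded positive operator on H and S a closed subspace such that S + N(A) is closed. Then (A,S) is compatible if and only if (A, P_K(S)) is compatible, where K is the closure of R(A) and P_K(S) is the (closed) image of S under the orthogonal projection onto K. -/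
open scoped InnerProductSpace
open ContinuousLinearMap

/-- If `S + N(A)` is closed, then `(A, S)` is compatible iff `(A, P_K(S))` is compatible,
where `K = closure R(A)` and `PK` is the orthogonal projection onto `K`
(characterized as the self-adjoint idempotent with range `K`). -/
theorem compatible_iff_compatible_proj {H : Type*} [NormedAddCommGroup H]
    [InnerProductSpace ℂ H] [CompleteSpace H] (A PK : H →L[ℂ] H) (hA : A.IsPositive)
    (S : Submodule ℂ H) (hS : IsClosed (S : Set H))
    (hPK : IsSelfAdjoint PK ∧ PK ∘L PK = PK ∧
      LinearMap.range (PK : H →ₗ[ℂ] H) = (LinearMap.range (A : H →ₗ[ℂ] H)).topologicalClosure)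
    (hSN : IsClosed ((S ⊔ LinearMap.ker (A : H →ₗ[ℂ] H) : Submodule ℂ H) : Set H)) :
    (S ⊔ Sᗮ.comap (A : H →ₗ[ℂ] H) = ⊤) ↔ (S.map (PK : H →ₗ[ℂ] H) ⊔ ((S.map (PK : H →ₗ[ℂ] H))ᗮ).comap (A : H →ₗ[ℂ] H) = ⊤) := by
  obtain ⟨hsa, hidem, hrange⟩ := hPK
  -- inner product identities
  have hPKinner : ∀ x y : H, ⟪PK x, y⟫_ℂ = ⟪x, PK y⟫_ℂ := by
    intro x y
    conv_lhs => rw [← hsa.adjoint_eq]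
    rw [ContinuousLinearMap.adjoint_inner_left]
  have hAinner : ∀ x y : H, ⟪A x, y⟫_ℂ = ⟪x, A y⟫_ℂ := by
    intro x y
    conv_lhs => rw [← hA.isSelfAdjoint.adjoint_eq]
    rw [ContinuousLinearMap.adjoint_inner_left]
  -- PK fixes its range, in particular the range of A
  have hfix : ∀ x : H, PK (A x) = A x := by
    intro x
    have hx : A x ∈ LinearMap.range (PK : H →ₗ[ℂ] H) := by
      rw [hrange]
      exact Submodule.le_topologicalClosure _ ⟨x, rfl⟩
    obtain ⟨y, hy⟩ := hx
    rw [← hy, ContinuousLinearMap.coe_coe, ← ContinuousLinearMap.comp_apply, hidem]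
  -- s - PK s ∈ ker A
  have hker : ∀ s : H, A (s - PK s) = 0 := by
    intro s
    set x := s - PK s with hxdef
    have hPKx : PK x = 0 := by
      simp only [hxdef, map_sub]
      rw [← ContinuousLinearMap.comp_apply, hidem, sub_self]
    have h0 : ⟪A x, A x⟫_ℂ = 0 :=
      calc ⟪A x, A x⟫_ℂ = ⟪x, A (A x)⟫_ℂ := hAinner x (A x)
        _ = ⟪x, PK (A (A x))⟫_ℂ := by rw [hfix]
        _ = ⟪PK x, A (A x)⟫_ℂ := (hPKinner x (A (A x))).symm
        _ = 0 := by rw [hPKx, inner_zero_left]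
    exact inner_self_eq_zero.mp h0
  -- the preimages of the orthogonal complements agree
  have hcomap : Sᗮ.comap (A : H →ₗ[ℂ] H) = ((S.map (PK : H →ₗ[ℂ] H))ᗮ).comap (A : H →ₗ[ℂ] H) := by
    ext x
    simp only [Submodule.mem_comap, Submodule.mem_orthogonal]
    constructor
    · rintro h u hu
      obtain ⟨s, hs, rfl⟩ := hu
      simp only [ContinuousLinearMap.coe_coe]
      rw [hPKinner, hfix]
      exact h s hs
    · intro h s hs
      have := h (PK s) ⟨s, hs, rfl⟩
      simp only [ContinuousLinearMap.coe_coe] at this ⊢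
      rwa [hPKinner, hfix] at this
  -- the two suprema are in fact equal submodules
  have key : S ⊔ Sᗮ.comap (A : H →ₗ[ℂ] H) = S.map (PK : H →ₗ[ℂ] H) ⊔ ((S.map (PK : H →ₗ[ℂ] H))ᗮ).comap (A : H →ₗ[ℂ] H) := by
    rw [← hcomap]
    have hkerle : LinearMap.ker (A : H →ₗ[ℂ] H) ≤ Sᗮ.comap (A : H →ₗ[ℂ] H) := by
      intro x hx
      rw [Submodule.mem_comap, LinearMap.mem_ker.mp hx]
      exact Sᗮ.zero_mem
    apply le_antisymm
    · refine sup_le ?_ le_sup_right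
      intro s hs
      have h1 : PK s ∈ S.map (PK : H →ₗ[ℂ] H) ⊔ Sᗮ.comap (A : H →ₗ[ℂ] H) :=
        le_sup_left (α := Submodule ℂ H) ⟨s, hs, rfl⟩
      have h2 : s - PK s ∈ S.map (PK : H →ₗ[ℂ] H) ⊔ Sᗮ.comap (A : H →ₗ[ℂ] H) :=
        le_sup_right (α := Submodule ℂ H) (hkerle (LinearMap.mem_ker.mpr (hker s)))
      have := Submodule.add_mem _ h1 h2
      rwa [add_sub_cancel] at this
    · refine sup_le ?_ le_sup_right
      rintro u ⟨s, hs, rfl⟩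
      have h1 : s ∈ S ⊔ Sᗮ.comap (A : H →ₗ[ℂ] H) := le_sup_left (α := Submodule ℂ H) hs
      have h2 : s - PK s ∈ S ⊔ Sᗮ.comap (A : H →ₗ[ℂ] H) :=
        le_sup_right (α := Submodule ℂ H) (hkerle (LinearMap.mem_ker.mpr (hker s)))
      have := Submodule.sub_mem _ h1 h2
      rwa [sub_sub_cancel] at this
  rw [key]
end

section
/- Let A be a bounded positive operator on H and S a closed subspace. Then (A,S) is compatible if and only if R(A^{1/2}) = A^{1/2}(S) + (A^{1/2}(S))^⊥ ∩ R(A^{1/2}) and closure(A^{1/2}(S)) ∩ R(A^{1/2}) = A^{1/2}(S). -/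
open scoped InnerProductSpace
open ContinuousLinearMap

/-- `(A, S)` is compatible iff
`R(A^{1/2}) = A^{1/2}(S) + (A^{1/2}(S))^⊥ ∩ R(A^{1/2})` and
`closure(A^{1/2}(S)) ∩ R(A^{1/2}) = A^{1/2}(S)`.  Here `sq = A^{1/2}`. -/
theorem compatible_iff_sqrt_decomposition {H : Type*} [NormedAddCommGroup H]
    [InnerProductSpace ℂ H] [CompleteSpace H] (A sq : H →L[ℂ] H)
    (hA : A.IsPositive) (hsq : sq.IsPositive) (hsq2 : sq ∘L sq = A)
    (S : Submodule ℂ H) (hS : IsClosed (S : Set H)) :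
    (S ⊔ Sᗮ.comap (A : H →ₗ[ℂ] H) = ⊤) ↔
      (LinearMap.range (sq : H →ₗ[ℂ] H) = S.map (sq : H →ₗ[ℂ] H) ⊔ ((S.map (sq : H →ₗ[ℂ] H))ᗮ ⊓ LinearMap.range (sq : H →ₗ[ℂ] H)) ∧
       (S.map (sq : H →ₗ[ℂ] H)).topologicalClosure ⊓ LinearMap.range (sq : H →ₗ[ℂ] H) = S.map (sq : H →ₗ[ℂ] H)) := by
  have hsa : ContinuousLinearMap.adjoint sq = sq := hsq.isSelfAdjoint.adjoint_eq
  set M := S.map (sq : H →ₗ[ℂ] H) with hM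
  have hAx : ∀ u x : H, (⟪u, A x⟫_ℂ) = ⟪sq u, sq x⟫_ℂ := by
    intro u x
    rw [← hsq2, comp_apply, ← adjoint_inner_left sq, hsa]
  have key : ∀ x : H, x ∈ Sᗮ.comap (A : H →ₗ[ℂ] H) ↔ sq x ∈ Mᗮ := by
    intro x
    simp only [Submodule.mem_comap, Submodule.mem_orthogonal]
    constructor
    · rintro h y hy
      rcases Submodule.mem_map.mp hy with ⟨s, hs, rfl⟩
      rw [ContinuousLinearMap.coe_coe, ← hAx]
      exact h s hs
    · intro h u hu
      rw [ContinuousLinearMap.coe_coe, hAx]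
      exact h (sq u) (Submodule.mem_map_of_mem hu)
  have hMrange : M ≤ LinearMap.range (sq : H →ₗ[ℂ] H) := by
    rintro _ ⟨s, hs, rfl⟩
    exact ⟨s, rfl⟩
  constructor
  · intro h
    constructor
    · apply le_antisymm
      · rintro _ ⟨x, rfl⟩
        have hx : x ∈ S ⊔ Sᗮ.comap (A : H →ₗ[ℂ] H) := by rw [h]; trivial
        obtain ⟨s, hs, t, ht, rfl⟩ := Submodule.mem_sup.mp hx
        refine Submodule.mem_sup.mpr ⟨sq s, Submodule.mem_map_of_mem hs, sq t,
          ⟨(key t).mp ht, ⟨t, rfl⟩⟩, ?_⟩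
        rw [← map_add]; rfl
      · exact sup_le hMrange inf_le_right
    · apply le_antisymm
      · rintro y ⟨hyc, hyr⟩
        obtain ⟨x, rfl⟩ := hyr
        have hx : x ∈ S ⊔ Sᗮ.comap (A : H →ₗ[ℂ] H) := by rw [h]; trivial
        obtain ⟨s, hs, t, ht, hst⟩ := Submodule.mem_sup.mp hx
        have hto : sq t ∈ Mᗮ := (key t).mp ht
        have hcl : sq x ∈ Mᗮᗮ := by
          rw [Submodule.orthogonal_orthogonal_eq_closure]
          exact hyc
        have hso : sq s ∈ Mᗮᗮ :=
          Submodule.le_orthogonal_orthogonal M (Submodule.mem_map_of_mem hs)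
        have htoo : sq t ∈ Mᗮᗮ := by
          have : sq t = sq x - sq s := by rw [← hst, map_add]; abel
          rw [this]
          exact Submodule.sub_mem _ hcl hso
        have h0 : sq t = 0 := by
          have := Mᗮ.orthogonal_disjoint
          have hb : sq t ∈ (⊥ : Submodule ℂ H) := this.le_bot (Submodule.mem_inf.mpr ⟨hto, htoo⟩)
          simpa using hb
        have : sq x = sq s := by
          rw [← hst, map_add, h0, add_zero]
        rw [ContinuousLinearMap.coe_coe, this]
        exact Submodule.mem_map_of_mem hs
      · exact le_inf (Submodule.le_topologicalClosure M) hMrange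
  · rintro ⟨h1, _⟩
    rw [eq_top_iff]
    rintro x -
    have hx : sq x ∈ LinearMap.range (sq : H →ₗ[ℂ] H) := ⟨x, rfl⟩
    rw [h1] at hx
    obtain ⟨m, hm, w, hw, hsum⟩ := Submodule.mem_sup.mp hx
    obtain ⟨s, hs, rfl⟩ := hm
    refine Submodule.mem_sup.mpr ⟨s, hs, x - s, (key _).mpr ?_, by abel⟩
    have : sq (x - s) = w := by rw [map_sub, ← hsum, ContinuousLinearMap.coe_coe]; abel
    rw [this]
    exact hw.1
end

section
/- Let A be a bounded positive operator on H, S a closed subspace, P the orthogonal projection onto S. The following are equivalent: (i) R(PAP) is closed; (ii) A^{1/2}(S) is closed in H; (iii) A(S) is closed in H. -/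
open scoped InnerProductSpace
open ContinuousLinearMap

private lemma closed_range_iff_bdd {H : Type*} [NormedAddCommGroup H]
    [InnerProductSpace ℂ H] [CompleteSpace H] (T : H →L[ℂ] H) :
    IsClosed ((LinearMap.range (T : H →ₗ[ℂ] H) : Submodule ℂ H) : Set H) ↔
      ∃ C : ℝ, 0 < C ∧ ∀ x ∈ (LinearMap.ker (T : H →ₗ[ℂ] H))ᗮ, ‖x‖ ≤ C * ‖T x‖ := by
  set K := LinearMap.ker (T : H →ₗ[ℂ] H) with hK
  haveI : CompleteSpace K := (ContinuousLinearMap.isClosed_ker T).completeSpace_coe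
  haveI : CompleteSpace (Kᗮ : Submodule ℂ H) :=
    (Submodule.isClosed_orthogonal K).completeSpace_coe
  set f : (Kᗮ : Submodule ℂ H) →L[ℂ] H := T.comp (Kᗮ).subtypeL with hf
  have hfx : ∀ x : Kᗮ, f x = T x := fun x => rfl
  have hrange : LinearMap.range (f : Kᗮ →ₗ[ℂ] H) = LinearMap.range (T : H →ₗ[ℂ] H) := by
    apply le_antisymm
    · rintro _ ⟨x, rfl⟩; exact ⟨x, rfl⟩
    · rintro _ ⟨x, rfl⟩
      obtain ⟨y, hy, z, hz, rfl⟩ := K.exists_add_mem_mem_orthogonal x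
      refine ⟨⟨z, hz⟩, ?_⟩
      have hy0 : T y = 0 := hy
      rw [ContinuousLinearMap.coe_coe, ContinuousLinearMap.coe_coe, hfx, map_add, hy0, zero_add]
  have hker : LinearMap.ker (f : Kᗮ →ₗ[ℂ] H) = ⊥ := by
    rw [LinearMap.ker_eq_bot']
    rintro ⟨m, hm⟩ h
    have hm0 : T m = 0 := (hfx ⟨m, hm⟩).symm.trans h
    have hmK : m ∈ K := hm0
    have : m = 0 := (Submodule.disjoint_def.mp K.orthogonal_disjoint) m hmK hm
    exact Subtype.ext this
  constructor
  · intro hcl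
    set R : Submodule ℂ H := LinearMap.range (T : H →ₗ[ℂ] H) with hR
    haveI : CompleteSpace R := hcl.completeSpace_coe
    set g : (Kᗮ : Submodule ℂ H) →L[ℂ] R :=
      f.codRestrict R (fun x => hrange ▸ LinearMap.mem_range_self (f : Kᗮ →ₗ[ℂ] H) x) with hg
    have hgker : LinearMap.ker (g : Kᗮ →ₗ[ℂ] R) = ⊥ := by
      rw [ContinuousLinearMap.ker_codRestrict, hker]
    have hgsurj : LinearMap.range (g : Kᗮ →ₗ[ℂ] R) = ⊤ := by
      rw [LinearMap.range_eq_top]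
      rintro ⟨y, hy⟩
      rw [← hrange] at hy
      obtain ⟨x, hx⟩ := hy
      exact ⟨x, Subtype.ext hx⟩
    set e := ContinuousLinearEquiv.ofBijective g hgker hgsurj with he
    refine ⟨‖e.symm.toContinuousLinearMap‖ + 1, by positivity, fun x hx => ?_⟩
    have h1 : (⟨x, hx⟩ : Kᗮ) = e.symm (e ⟨x, hx⟩) := (e.symm_apply_apply _).symm
    have h2 : ‖(⟨x, hx⟩ : Kᗮ)‖ ≤ ‖e.symm.toContinuousLinearMap‖ * ‖e ⟨x, hx⟩‖ := by
      conv_lhs => rw [h1]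
      exact e.symm.toContinuousLinearMap.le_opNorm _
    have h3 : ‖e ⟨x, hx⟩‖ = ‖T x‖ := by
      have : e ⟨x, hx⟩ = g ⟨x, hx⟩ := by rw [he]; rfl
      rw [this]
      rfl
    have h4 : ‖(⟨x, hx⟩ : Kᗮ)‖ = ‖x‖ := rfl
    rw [h4, h3] at h2
    calc ‖x‖ ≤ ‖e.symm.toContinuousLinearMap‖ * ‖T x‖ := h2
      _ ≤ (‖e.symm.toContinuousLinearMap‖ + 1) * ‖T x‖ := by
          apply mul_le_mul_of_nonneg_right (by linarith) (norm_nonneg _)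
  · rintro ⟨C, hC, hbound⟩
    have hanti : AntilipschitzWith C.toNNReal f :=
      f.antilipschitz_of_bound (fun x => by
        rw [Real.coe_toNNReal C hC.le, hfx]
        exact hbound x x.2)
    have hclr : IsClosed (Set.range f) := hanti.isClosed_range f.uniformContinuous
    have : (LinearMap.range (T : H →ₗ[ℂ] H) : Set H) = Set.range f := by
      rw [← hrange]; rfl
    rw [this]; exact hclr

/-- With `P` the orthogonal projection onto the closed subspace `S` and `sq = A^{1/2}`, TFAE:
(i) `R(PAP)` is closed; (ii) `A^{1/2}(S)` is closed in `H`; (iii) `A(S)` is closed in `H`. -/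
theorem range_pap_closed_tfae {H : Type*} [NormedAddCommGroup H]
    [InnerProductSpace ℂ H] [CompleteSpace H] (A sq P : H →L[ℂ] H)
    (hA : A.IsPositive) (hsq : sq.IsPositive) (hsq2 : sq ∘L sq = A)
    (S : Submodule ℂ H) (hS : IsClosed (S : Set H))
    (hP : IsSelfAdjoint P ∧ P ∘L P = P ∧ LinearMap.range (P : H →ₗ[ℂ] H) = S) :
    (IsClosed ((LinearMap.range ((P ∘L A ∘L P : H →L[ℂ] H) : H →ₗ[ℂ] H) : Submodule ℂ H) : Set H) ↔
        IsClosed ((S.map (sq : H →ₗ[ℂ] H) : Submodule ℂ H) : Set H)) ∧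
    (IsClosed ((LinearMap.range ((P ∘L A ∘L P : H →L[ℂ] H) : H →ₗ[ℂ] H) : Submodule ℂ H) : Set H) ↔
        IsClosed ((S.map (A : H →ₗ[ℂ] H) : Submodule ℂ H) : Set H)) := by
  obtain ⟨Psa, Pidem, Prange⟩ := hP
  have hPadj : ∀ x y : H, ⟪P x, y⟫_ℂ = ⟪x, P y⟫_ℂ := fun x y => by
    conv_lhs => rw [← Psa.adjoint_eq]
    exact ContinuousLinearMap.adjoint_inner_left P y x
  have hsqadj : ∀ x y : H, ⟪sq x, y⟫_ℂ = ⟪x, sq y⟫_ℂ := fun x y => by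
    conv_lhs => rw [← hsq.isSelfAdjoint.adjoint_eq]
    exact ContinuousLinearMap.adjoint_inner_left sq y x
  have hApp : ∀ x : H, A x = sq (sq x) := fun x => by
    rw [← hsq2]; rfl
  have hPfix : ∀ s ∈ S, P s = s := by
    intro s hs
    rw [← Prange] at hs
    obtain ⟨x, rfl⟩ := hs
    exact congrFun (congrArg DFunLike.coe Pidem) x
  have hPnorm : ∀ y : H, ‖P y‖ ≤ ‖y‖ := by
    intro y
    rcases eq_or_ne (P y) 0 with h | h
    · simp [h]
    · have h1 : ‖P y‖ * ‖P y‖ = RCLike.re ⟪P y, P y⟫_ℂ := (inner_self_eq_norm_mul_norm _).symm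
      have h2 : ⟪P y, P y⟫_ℂ = ⟪y, P y⟫_ℂ := by
        rw [hPadj y (P y), hPfix (P y) (Prange ▸ LinearMap.mem_range_self (P : H →ₗ[ℂ] H) y)]
      have h3 : RCLike.re ⟪y, P y⟫_ℂ ≤ ‖y‖ * ‖P y‖ :=
        ((le_abs_self _).trans (RCLike.abs_re_le_norm _)).trans (norm_inner_le_norm y (P y))
      have h4 : ‖P y‖ * ‖P y‖ ≤ ‖y‖ * ‖P y‖ := by rw [h1, h2]; exact h3
      exact le_of_mul_le_mul_right h4 (norm_pos_iff.mpr h)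
  -- kernels
  set K := LinearMap.ker ((sq ∘L P : H →L[ℂ] H) : H →ₗ[ℂ] H) with hKdef
  have hsq_zero : ∀ x : H, sq (P x) = 0 → A (P x) = 0 := fun x h => by
    rw [hApp, h, map_zero]
  have hkerPAP : LinearMap.ker ((P ∘L A ∘L P : H →L[ℂ] H) : H →ₗ[ℂ] H) = K := by
    ext x
    simp only [LinearMap.mem_ker, ContinuousLinearMap.coe_coe, ContinuousLinearMap.coe_comp', Function.comp_apply, hKdef]
    constructor
    · intro h
      have h0 : ⟪P (A (P x)), x⟫_ℂ = 0 := by rw [h]; simp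
      have h1 : ⟪P (A (P x)), x⟫_ℂ = ⟪sq (P x), sq (P x)⟫_ℂ := by
        rw [hPadj, hApp, hsqadj]
      rw [h1] at h0
      exact inner_self_eq_zero.mp h0
    · intro h
      rw [hsq_zero x h, map_zero]
  have hkerAP : LinearMap.ker ((A ∘L P : H →L[ℂ] H) : H →ₗ[ℂ] H) = K := by
    ext x
    simp only [LinearMap.mem_ker, ContinuousLinearMap.coe_coe, ContinuousLinearMap.coe_comp', Function.comp_apply]
    constructor
    · intro h
      have : x ∈ LinearMap.ker ((P ∘L A ∘L P : H →L[ℂ] H) : H →ₗ[ℂ] H) := by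
        simp only [LinearMap.mem_ker, ContinuousLinearMap.coe_coe, ContinuousLinearMap.coe_comp', Function.comp_apply, h,
          map_zero]
      rwa [hkerPAP] at this
    · intro h; exact hsq_zero x h
  -- ranges
  have hrangeSq : LinearMap.range ((sq ∘L P : H →L[ℂ] H) : H →ₗ[ℂ] H) = S.map (sq : H →ₗ[ℂ] H) := by
    apply le_antisymm
    · rintro _ ⟨x, rfl⟩
      exact ⟨P x, Prange ▸ LinearMap.mem_range_self (P : H →ₗ[ℂ] H) x, rfl⟩
    · rintro _ ⟨s, hs, rfl⟩
      exact ⟨s, by simp [hPfix s hs]⟩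
  have hrangeA : LinearMap.range ((A ∘L P : H →L[ℂ] H) : H →ₗ[ℂ] H) = S.map (A : H →ₗ[ℂ] H) := by
    apply le_antisymm
    · rintro _ ⟨x, rfl⟩
      exact ⟨P x, Prange ▸ LinearMap.mem_range_self (P : H →ₗ[ℂ] H) x, rfl⟩
    · rintro _ ⟨s, hs, rfl⟩
      exact ⟨s, by simp [hPfix s hs]⟩
  -- N ≤ S
  have hSperpK : Sᗮ ≤ K := by
    intro x hx
    have hPx0 : P x = 0 := by
      have h1 : ⟪P x, P x⟫_ℂ = ⟪x, P x⟫_ℂ := by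
        rw [hPadj x (P x), hPfix (P x) (Prange ▸ LinearMap.mem_range_self (P : H →ₗ[ℂ] H) x)]
      have h2 : ⟪x, P x⟫_ℂ = 0 :=
        Submodule.mem_orthogonal' S x |>.mp hx (P x) (Prange ▸ LinearMap.mem_range_self (P : H →ₗ[ℂ] H) x)
      exact inner_self_eq_zero.mp (h1.trans h2)
    show sq (P x) = 0
    rw [hPx0, map_zero]
  have hNS : Kᗮ ≤ S := by
    have h1 : Kᗮ ≤ Sᗮᗮ := Submodule.orthogonal_le hSperpK
    rwa [Submodule.orthogonal_orthogonal_eq_closure, hS.submodule_topologicalClosure_eq] at h1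
  have hPN : ∀ x ∈ Kᗮ, P x = x := fun x hx => hPfix x (hNS hx)
  -- closedness ↔ bounded below on Kᗮ
  have e1 : IsClosed ((LinearMap.range ((P ∘L A ∘L P : H →L[ℂ] H) : H →ₗ[ℂ] H) : Submodule ℂ H) : Set H) ↔
      ∃ C : ℝ, 0 < C ∧ ∀ x ∈ Kᗮ, ‖x‖ ≤ C * ‖P (A (P x))‖ := by
    rw [closed_range_iff_bdd, hkerPAP]; rfl
  have e2 : IsClosed ((S.map (sq : H →ₗ[ℂ] H) : Submodule ℂ H) : Set H) ↔
      ∃ C : ℝ, 0 < C ∧ ∀ x ∈ Kᗮ, ‖x‖ ≤ C * ‖sq (P x)‖ := by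
    rw [← hrangeSq, closed_range_iff_bdd]; rfl
  have e3 : IsClosed ((S.map (A : H →ₗ[ℂ] H) : Submodule ℂ H) : Set H) ↔
      ∃ C : ℝ, 0 < C ∧ ∀ x ∈ Kᗮ, ‖x‖ ≤ C * ‖A (P x)‖ := by
    rw [← hrangeA, closed_range_iff_bdd, hkerAP]; rfl
  -- transfers
  have imp1 : (∃ C : ℝ, 0 < C ∧ ∀ x ∈ Kᗮ, ‖x‖ ≤ C * ‖sq (P x)‖) →
      (∃ C : ℝ, 0 < C ∧ ∀ x ∈ Kᗮ, ‖x‖ ≤ C * ‖P (A (P x))‖) := by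
    rintro ⟨C, hC, hb⟩
    refine ⟨C ^ 2, by positivity, fun x hx => ?_⟩
    rcases eq_or_ne x 0 with rfl | hx0
    · simp
    · have h1 : ⟪P (A (P x)), x⟫_ℂ = ⟪sq (P x), sq (P x)⟫_ℂ := by
        rw [hPadj, hPN x hx, hApp, hsqadj]
      have h2 : ‖sq (P x)‖ ^ 2 = RCLike.re ⟪P (A (P x)), x⟫_ℂ := by
        rw [h1, inner_self_eq_norm_sq]
      have key : ‖sq (P x)‖ ^ 2 ≤ ‖P (A (P x))‖ * ‖x‖ := by
        rw [h2]
        exact ((le_abs_self _).trans (RCLike.abs_re_le_norm _)).trans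
          (norm_inner_le_norm _ _)
      have hxpos : (0 : ℝ) < ‖x‖ := norm_pos_iff.mpr hx0
      have hbx := hb x hx
      nlinarith [norm_nonneg (sq (P x)), norm_nonneg (P (A (P x)))]
  have imp2 : (∃ C : ℝ, 0 < C ∧ ∀ x ∈ Kᗮ, ‖x‖ ≤ C * ‖P (A (P x))‖) →
      (∃ C : ℝ, 0 < C ∧ ∀ x ∈ Kᗮ, ‖x‖ ≤ C * ‖A (P x)‖) := by
    rintro ⟨C, hC, hb⟩
    exact ⟨C, hC, fun x hx => (hb x hx).trans
      (mul_le_mul_of_nonneg_left (hPnorm _) hC.le)⟩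
  have imp3 : (∃ C : ℝ, 0 < C ∧ ∀ x ∈ Kᗮ, ‖x‖ ≤ C * ‖A (P x)‖) →
      (∃ C : ℝ, 0 < C ∧ ∀ x ∈ Kᗮ, ‖x‖ ≤ C * ‖sq (P x)‖) := by
    rintro ⟨C, hC, hb⟩
    refine ⟨C * (‖sq‖ + 1), by positivity, fun x hx => ?_⟩
    have h1 : ‖A (P x)‖ ≤ ‖sq‖ * ‖sq (P x)‖ := by
      rw [hApp]; exact sq.le_opNorm _
    have hbx := hb x hx
    nlinarith [norm_nonneg (sq (P x)), norm_nonneg sq]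
  constructor
  · rw [e1, e2]
    exact ⟨fun h => imp3 (imp2 h), fun h => imp1 h⟩
  · rw [e1, e3]
    exact ⟨imp2, fun h => imp1 (imp3 h)⟩
end

section
/- Let A be a bounded positive operator on H, S a closed subspace, P the orthogonal projection onto S. If R(PAP) is closed then the pair (A,S) is compatible, i.e., H = S + A^{-1}(S^⊥). In particular compatibility holds whenever A(S) is finite dimensional. -/
open scoped InnerProductSpace
open ContinuousLinearMap

private lemma apply_eq_zero_of_inner_self_eq_zero {H : Type*} [NormedAddCommGroup H]
    [InnerProductSpace ℂ H] [CompleteSpace H] {A : H →L[ℂ] H} (hA : A.IsPositive)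
    {w : H} (hw : ⟪A w, w⟫_ℂ = 0) : A w = 0 := by
  set v := A w with hv
  have hsymm := hA.isSelfAdjoint.isSymmetric
  by_contra hne
  have hvn : 0 < ‖v‖ := norm_pos_iff.mpr hne
  have hvpos : (0:ℝ) < ‖v‖ ^ 2 := by positivity
  have ha : (0:ℝ) ≤ RCLike.re ⟪A v, v⟫_ℂ := (RCLike.nonneg_iff.mp (hA.inner_nonneg_left v)).1
  set a := RCLike.re ⟪A v, v⟫_ℂ with haa
  set t : ℝ := -(‖v‖ ^ 2) / (a + 1) with ht
  have key : (0:ℝ) ≤ RCLike.re ⟪A (w + (t:ℂ) • v), w + (t:ℂ) • v⟫_ℂ :=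
    (RCLike.nonneg_iff.mp (hA.inner_nonneg_left _)).1
  have hwv : ⟪A w, v⟫_ℂ = ((‖v‖ : ℂ)) ^ 2 := by
    rw [← hv]; exact inner_self_eq_norm_sq_to_K v
  have hvw : ⟪A v, w⟫_ℂ = ((‖v‖ : ℂ)) ^ 2 := by
    have h := hsymm v w
    rw [show ⟪A v, w⟫_ℂ = ⟪(A : H →ₗ[ℂ] H) v, w⟫_ℂ from rfl, h]
    rw [show ⟪v, (A : H →ₗ[ℂ] H) w⟫_ℂ = ⟪v, v⟫_ℂ from rfl]
    exact inner_self_eq_norm_sq_to_K v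
  have e1 : ⟪A (w + (t:ℂ) • v), w + (t:ℂ) • v⟫_ℂ
      = (t:ℂ) * (‖v‖:ℂ)^2 + (t:ℂ) * (‖v‖:ℂ)^2 + (t:ℂ) * (t:ℂ) * ⟪A v, v⟫_ℂ := by
    rw [map_add, map_smul]
    simp only [inner_add_left, inner_add_right, inner_smul_left, inner_smul_right,
      hw, show ⟪A w, w⟫_ℂ = 0 from hw, hwv, hvw, Complex.conj_ofReal]
    ring
  have hra : ⟪A v, v⟫_ℂ = (a : ℂ) :=
    ((ContinuousLinearMap.isPositive_iff_complex A).mp hA v).1.symm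
  have expand : RCLike.re ⟪A (w + (t:ℂ) • v), w + (t:ℂ) • v⟫_ℂ
      = t * (‖v‖ ^ 2) + t * (‖v‖ ^ 2) + t * t * a := by
    rw [e1, hra]
    have h2 : (t:ℂ) * (‖v‖:ℂ)^2 + (t:ℂ) * (‖v‖:ℂ)^2 + (t:ℂ) * (t:ℂ) * (a:ℂ)
        = ((t * ‖v‖^2 + t * ‖v‖^2 + t * t * a : ℝ) : ℂ) := by push_cast; ring
    rw [h2]; exact Complex.ofReal_re _
  rw [expand] at key
  have h1 : a + 1 > 0 := by linarith
  have h2 : t < 0 := by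
    rw [ht]; apply div_neg_of_neg_of_pos <;> nlinarith
  have h3 : t * (a + 1) = -(‖v‖ ^ 2) := by
    rw [ht, div_mul_cancel₀]; exact ne_of_gt h1
  nlinarith [key, h2, h3, hvpos, mul_pos (neg_pos.2 h2) hvpos]

/-- If `R(PAP)` is closed then `(A, S)` is compatible, i.e. `H = S + A⁻¹(S^⊥)`.
In particular compatibility holds whenever `A(S)` is finite dimensional. -/
theorem compatible_of_range_pap_closed {H : Type*} [NormedAddCommGroup H]
    [InnerProductSpace ℂ H] [CompleteSpace H] (A P : H →L[ℂ] H) (hA : A.IsPositive)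
    (S : Submodule ℂ H) (hS : IsClosed (S : Set H))
    (hP : IsSelfAdjoint P ∧ P ∘L P = P ∧ LinearMap.range (P : H →ₗ[ℂ] H) = S) :
    (IsClosed ((LinearMap.range ((P ∘L A ∘L P : H →L[ℂ] H) : H →ₗ[ℂ] H) : Submodule ℂ H) : Set H) →
        S ⊔ Sᗮ.comap (A : H →ₗ[ℂ] H) = ⊤) ∧
    (FiniteDimensional ℂ (S.map (A : H →ₗ[ℂ] H)) → S ⊔ Sᗮ.comap (A : H →ₗ[ℂ] H) = ⊤) := by
  obtain ⟨hPsa, hPP, hPrange⟩ := hP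
  have hPsymm := hPsa.isSymmetric
  have hAsymm := hA.isSelfAdjoint.isSymmetric
  set B := P ∘L A ∘L P with hB
  have hBpos : B.IsPositive := by
    have h := hA.conj_adjoint P
    rwa [hPsa.adjoint_eq] at h
  have hker : ∀ z, B z = 0 → A (P z) = 0 := by
    intro z hz
    apply apply_eq_zero_of_inner_self_eq_zero hA
    have h1 : ⟪B z, z⟫_ℂ = ⟪A (P z), P z⟫_ℂ := hPsymm _ _
    rw [hz] at h1
    simpa using h1.symm
  have main : IsClosed ((LinearMap.range (B : H →ₗ[ℂ] H) : Submodule ℂ H) : Set H) →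
      S ⊔ Sᗮ.comap (A : H →ₗ[ℂ] H) = ⊤ := by
    intro hclosed
    rw [eq_top_iff]
    intro x _
    have hx : P (A x) ∈ LinearMap.range (B : H →ₗ[ℂ] H) := by
      have hmem : P (A x) ∈ (LinearMap.range (B : H →ₗ[ℂ] H))ᗮᗮ := by
        rw [Submodule.mem_orthogonal]
        intro u hu
        rw [Submodule.mem_orthogonal] at hu
        have hBu : B u = 0 := by
          apply apply_eq_zero_of_inner_self_eq_zero hBpos
          exact hu (B u) (LinearMap.mem_range_self _ u)
        have : ⟪P (A x), u⟫_ℂ = 0 := by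
          calc ⟪P (A x), u⟫_ℂ = ⟪A x, P u⟫_ℂ := hPsymm _ _
            _ = ⟪x, A (P u)⟫_ℂ := hAsymm _ _
            _ = 0 := by rw [hker u hBu]; simp
        rw [← inner_conj_symm, this, map_zero]
      rwa [(LinearMap.range (B : H →ₗ[ℂ] H)).orthogonal_orthogonal_eq_closure,
        hclosed.submodule_topologicalClosure_eq] at hmem
    obtain ⟨y, hy⟩ := hx
    have h1 : P y ∈ S := hPrange ▸ LinearMap.mem_range_self _ y
    have h2 : x - P y ∈ Sᗮ.comap (A : H →ₗ[ℂ] H) := by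
      rw [Submodule.mem_comap, Submodule.mem_orthogonal]
      intro v hv
      obtain ⟨w, rfl⟩ : ∃ w, P w = v := by rwa [← hPrange] at hv
      calc ⟪P w, A (x - P y)⟫_ℂ = ⟪w, P (A (x - P y))⟫_ℂ := hPsymm _ _
        _ = 0 := by
            have : P (A (x - P y)) = P (A x) - B y := by simp [hB, map_sub]
            rw [this, show B y = P (A x) from hy, sub_self, inner_zero_right]
    have : x = P y + (x - P y) := by abel
    rw [this]
    exact Submodule.add_mem_sup h1 h2
  refine ⟨main, fun hfin => main ?_⟩
  have hrange : LinearMap.range (B : H →ₗ[ℂ] H)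
      = Submodule.map P.toLinearMap (Submodule.map A.toLinearMap S) := by
    ext u
    constructor
    · rintro ⟨z, rfl⟩
      exact ⟨A (P z), ⟨P z, hPrange ▸ ⟨z, rfl⟩, rfl⟩, rfl⟩
    · rintro ⟨y, ⟨s, hs, rfl⟩, rfl⟩
      rw [← hPrange] at hs
      obtain ⟨z, rfl⟩ := hs
      exact ⟨z, rfl⟩
  rw [hrange]
  haveI hfin' : FiniteDimensional ℂ (Submodule.map A.toLinearMap S) := hfin
  haveI := Module.Finite.map (Submodule.map A.toLinearMap S) P.toLinearMap
  exact Submodule.closed_of_finiteDimensional _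
end

section
/- Let A be a bounded positive operator on H and S a closed subspace with orthogonal projection P; suppose (A,S) is compatible and let N = S ∩ N(A). Then the reduced solution Q of the equation (PAP)X = PA (the unique solution with range contained in the closure of R(PAP)) is a projection with range S ⊖ N and kernel A^{-1}(S^⊥), and P_{A,S} = Q + P_N, where P_{A,S} is the unique projection with range S and kernel A^{-1}(S^⊥) ⊖ N. -/
open scoped InnerProductSpace
open ContinuousLinearMap

section Aux

variable {H : Type*} [NormedAddCommGroup H] [InnerProductSpace ℂ H] [CompleteSpace H]

lemma aux_idem_fix (T : H →L[ℂ] H) (h : T ∘L T = T) {x : H}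
    (hx : x ∈ LinearMap.range (T : H →ₗ[ℂ] H)) : T x = x := by
  obtain ⟨y, rfl⟩ := hx
  have := congrArg (fun f : H →L[ℂ] H => f y) h
  simpa using this

lemma aux_ker_eq_orth (T : H →L[ℂ] H) (hsa : IsSelfAdjoint T) (hi : T ∘L T = T)
    {U : Submodule ℂ H} (hr : LinearMap.range (T : H →ₗ[ℂ] H) = U) :
    LinearMap.ker (T : H →ₗ[ℂ] H) = Uᗮ := by
  have hsym0 := (isSelfAdjoint_iff_isSymmetric.mp hsa)
  have hsym : ∀ u v : H, ⟪(T u : H), v⟫_ℂ = ⟪u, T v⟫_ℂ := fun u v => hsym0 u v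
  ext x
  simp only [LinearMap.mem_ker, Submodule.mem_orthogonal]
  constructor
  · intro h u hu
    rw [← hr] at hu
    obtain ⟨y, rfl⟩ := hu
    have h1 : ⟪(T y : H), x⟫_ℂ = ⟪y, T x⟫_ℂ := hsym y x
    simp only [ContinuousLinearMap.coe_coe] at h ⊢
    rw [h1, h, inner_zero_right]
  · intro h
    have hTx : T x ∈ U := hr ▸ LinearMap.mem_range_self _ x
    have h1 : ⟪(T x : H), x⟫_ℂ = 0 := h _ hTx
    have hTT : T (T x) = T x := aux_idem_fix T hi (LinearMap.mem_range_self _ x)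
    have h2 : ⟪(T x : H), T x⟫_ℂ = 0 := by
      calc ⟪(T x : H), T x⟫_ℂ = ⟪x, T (T x)⟫_ℂ := hsym x (T x)
        _ = ⟪x, T x⟫_ℂ := by rw [hTT]
        _ = 0 := by rw [← inner_conj_symm, h1, map_zero]
    exact inner_self_eq_zero.mp h2

lemma aux_orth_range (T : H →L[ℂ] H) (hsa : IsSelfAdjoint T) :
    (LinearMap.range (T : H →ₗ[ℂ] H))ᗮ = LinearMap.ker (T : H →ₗ[ℂ] H) := by
  have hsym0 := (isSelfAdjoint_iff_isSymmetric.mp hsa)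
  have hsym : ∀ u v : H, ⟪(T u : H), v⟫_ℂ = ⟪u, T v⟫_ℂ := fun u v => hsym0 u v
  ext x
  simp only [LinearMap.mem_ker, Submodule.mem_orthogonal]
  constructor
  · intro h
    have h1 : ⟪(T (T x) : H), x⟫_ℂ = 0 := h _ (LinearMap.mem_range_self _ (T x))
    have h2 : ⟪(T x : H), T x⟫_ℂ = 0 := by
      rw [← hsym (T x) x]
      exact h1
    exact inner_self_eq_zero.mp h2
  · intro h u hu
    obtain ⟨y, rfl⟩ := hu
    have h1 : ⟪(T y : H), x⟫_ℂ = ⟪y, T x⟫_ℂ := hsym y x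
    simp only [ContinuousLinearMap.coe_coe] at h ⊢
    rw [h1, h, inner_zero_right]

lemma aux_pos_zero (T : H →L[ℂ] H) (hT : T.IsPositive) (x : H)
    (h : ⟪(T x : H), x⟫_ℂ = 0) : T x = 0 := by
  have hsym := hT.1
  have hsym' : ∀ u v : H, ⟪(T u : H), v⟫_ℂ = ⟪u, T v⟫_ℂ := fun u v => hsym u v
  set a : ℝ := Complex.re ⟪(T (T x) : H), T x⟫_ℂ with ha
  set b : ℝ := ‖T x‖ ^ 2 with hbdef
  have ha0 : 0 ≤ a := hT.2 (T x)
  have key : ∀ t : ℝ, 0 ≤ a * t ^ 2 + 2 * t * b := by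
    intro t
    have h0 := hT.2 (x + (t : ℂ) • T x)
    rw [ContinuousLinearMap.reApplyInnerSelf_apply] at h0
    have hTTx : ⟪(T (T x) : H), x⟫_ℂ = ⟪(T x : H), T x⟫_ℂ := hsym' (T x) x
    have hnorm : ⟪(T x : H), T x⟫_ℂ = ((b : ℝ) : ℂ) := by
      rw [hbdef]; push_cast
      exact inner_self_eq_norm_sq_to_K (T x)
    have hz : ⟪(T (x + (t : ℂ) • T x) : H), x + (t : ℂ) • T x⟫_ℂ =
        (((2 * t * b : ℝ)) : ℂ) + (((t ^ 2 : ℝ)) : ℂ) * ⟪(T (T x) : H), T x⟫_ℂ := by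
      rw [map_add, map_smul, inner_add_left, inner_add_right, inner_add_right,
        inner_smul_left, inner_smul_right, inner_smul_left, inner_smul_right,
        hTTx, hnorm, h, Complex.conj_ofReal]
      push_cast
      ring
    rw [hz] at h0
    simp only [RCLike.re_to_complex, Complex.add_re, Complex.ofReal_re, Complex.re_ofReal_mul] at h0
    linarith
  set t0 : ℝ := -(2 * b) / (a + 1) with ht0def
  have hkey := key t0
  have h1 : (a + 1) * t0 = -(2 * b) := by
    rw [ht0def]; field_simp
  have h2 : (2 : ℝ) * b = -((a + 1) * t0) := by linarith
  have h3 : a * t0 ^ 2 + 2 * t0 * b = -t0 ^ 2 := by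
    calc a * t0 ^ 2 + 2 * t0 * b = a * t0 ^ 2 + t0 * (2 * b) := by ring
      _ = a * t0 ^ 2 + t0 * -((a + 1) * t0) := by rw [h2]
      _ = -t0 ^ 2 := by ring
  have ht0 : t0 = 0 := by nlinarith [sq_nonneg t0]
  have hb : b = 0 := by rw [ht0] at h1; linarith
  have : ‖T x‖ = 0 := by
    have := (pow_eq_zero_iff two_ne_zero).mp (hbdef ▸ hb)
    simpa using this
  exact norm_eq_zero.mp this

end Aux

/-- Suppose `(A, S)` is compatible, `P` is the orthogonal projection onto `S`,
`N = S ∩ N(A)`, `PN` is the orthogonal projection onto `N`, and `Q` is the reduced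
solution of `(PAP)X = PA` (the unique solution with range contained in
`closure R((PAP)*)` and kernel `N(PA)`).  Then `Q` is a projection with range `S ⊖ N`
and kernel `A⁻¹(S^⊥)`, and `P_{A,S} = Q + PN`, where `P_{A,S}` (here `R`) is the unique
projection with range `S` and kernel `A⁻¹(S^⊥) ⊖ N`. -/
theorem reduced_solution_is_distinguished_projection {H : Type*} [NormedAddCommGroup H]
    [InnerProductSpace ℂ H] [CompleteSpace H] (A P Q R PN : H →L[ℂ] H)
    (hA : A.IsPositive) (S : Submodule ℂ H) (hS : IsClosed (S : Set H))
    (hP : IsSelfAdjoint P ∧ P ∘L P = P ∧ LinearMap.range (P : H →ₗ[ℂ] H) = S)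
    (hcompat : S ⊔ Sᗮ.comap (A : H →ₗ[ℂ] H) = ⊤)
    (hPN : IsSelfAdjoint PN ∧ PN ∘L PN = PN ∧
      LinearMap.range (PN : H →ₗ[ℂ] H) = S ⊓ LinearMap.ker (A : H →ₗ[ℂ] H))
    (hQsol : (P ∘L A ∘L P) ∘L Q = P ∘L A)
    (hQrange : LinearMap.range (Q : H →ₗ[ℂ] H) ≤
      (LinearMap.range (adjoint (P ∘L A ∘L P) : H →ₗ[ℂ] H)).topologicalClosure)
    (hQker : LinearMap.ker (Q : H →ₗ[ℂ] H) = LinearMap.ker (P ∘L A : H →ₗ[ℂ] H))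
    (hR : R ∘L R = R ∧ LinearMap.range (R : H →ₗ[ℂ] H) = S ∧
      LinearMap.ker (R : H →ₗ[ℂ] H) = (Sᗮ.comap (A : H →ₗ[ℂ] H)) ⊓ (S ⊓ LinearMap.ker (A : H →ₗ[ℂ] H))ᗮ) :
    Q ∘L Q = Q ∧
    LinearMap.range (Q : H →ₗ[ℂ] H) = S ⊓ (S ⊓ LinearMap.ker (A : H →ₗ[ℂ] H))ᗮ ∧
    LinearMap.ker (Q : H →ₗ[ℂ] H) = Sᗮ.comap (A : H →ₗ[ℂ] H) ∧
    R = Q + PN := by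
  obtain ⟨hPsa, hPi, hPr⟩ := hP
  obtain ⟨hNsa, hNi, hNr⟩ := hPN
  obtain ⟨hRi, hRr, hRk⟩ := hR
  set N : Submodule ℂ H := S ⊓ LinearMap.ker (A : H →ₗ[ℂ] H) with hN
  haveI : CompleteSpace S := hS.completeSpace_coe
  have hsymP0 := (isSelfAdjoint_iff_isSymmetric.mp hPsa)
  have hsymP : ∀ u v : H, ⟪(P u : H), v⟫_ℂ = ⟪u, P v⟫_ℂ := fun u v => hsymP0 u v
  -- basic projection facts
  have hkerP : LinearMap.ker (P : H →ₗ[ℂ] H) = Sᗮ := aux_ker_eq_orth P hPsa hPi hPr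
  have hPfix : ∀ s ∈ S, P s = s := fun s hs => aux_idem_fix P hPi (hPr.symm ▸ hs)
  have hkerPN : LinearMap.ker (PN : H →ₗ[ℂ] H) = Nᗮ := aux_ker_eq_orth PN hNsa hNi hNr
  have hNfix : ∀ n ∈ N, PN n = n := fun n hn => aux_idem_fix PN hNi (hNr.symm ▸ hn)
  have hRfix : ∀ s ∈ S, R s = s := fun s hs => aux_idem_fix R hRi (hRr.symm ▸ hs)
  -- kernel of P ∘ A
  have hkerPA : LinearMap.ker ((P ∘L A : H →L[ℂ] H) : H →ₗ[ℂ] H) = Sᗮ.comap (A : H →ₗ[ℂ] H) := by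
    ext x
    simp only [LinearMap.mem_ker, ContinuousLinearMap.comp_apply, Submodule.mem_comap]
    rw [← hkerP]
    rfl
  have hQker' : LinearMap.ker (Q : H →ₗ[ℂ] H) = Sᗮ.comap (A : H →ₗ[ℂ] H) := hQker.trans hkerPA
  have hQzero : ∀ y ∈ Sᗮ.comap (A : H →ₗ[ℂ] H), Q y = 0 := by
    intro y hy
    have : y ∈ LinearMap.ker (Q : H →ₗ[ℂ] H) := hQker'.symm ▸ hy
    exact this
  -- kernel of P ∘ A ∘ P
  have hkerPAP : LinearMap.ker ((P ∘L A ∘L P : H →L[ℂ] H) : H →ₗ[ℂ] H) = Sᗮ ⊔ N := by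
    apply le_antisymm
    · intro x hx
      have hx0 : P (A (P x)) = 0 := hx
      have h1 : ⟪(A (P x) : H), P x⟫_ℂ = 0 := by
        rw [← hsymP (A (P x)) x]
        show ⟪(P (A (P x)) : H), x⟫_ℂ = 0
        rw [hx0, inner_zero_left]
      have h3 : A (P x) = 0 := aux_pos_zero A hA (P x) h1
      have hPxN : P x ∈ N := ⟨hPr ▸ LinearMap.mem_range_self _ x, h3⟩
      have hx2 : x - P x ∈ Sᗮ := by
        rw [← hkerP]
        have : P (x - P x) = 0 := by
          rw [map_sub, aux_idem_fix P hPi (x := P x) (LinearMap.mem_range_self _ x), sub_self]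
        exact this
      have hsum : x = (x - P x) + P x := by abel
      rw [hsum]
      exact Submodule.add_mem_sup hx2 hPxN
    · rw [sup_le_iff]
      constructor
      · intro x hx
        have hPx : P x = 0 := by rw [← hkerP] at hx; exact hx
        show P (A (P x)) = 0
        rw [hPx, map_zero, map_zero]
      · intro n hn
        have hAn : A n = 0 := hn.2
        show P (A (P n)) = 0
        rw [hPfix n hn.1, hAn, map_zero]
  -- adjoint of P ∘ A ∘ P
  have hadj : adjoint (P ∘L A ∘L P) = P ∘L A ∘L P := by
    have hP' : adjoint P = P := isSelfAdjoint_iff'.mp hPsa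
    have hA' : adjoint A = A := isSelfAdjoint_iff'.mp hA.isSelfAdjoint
    rw [adjoint_comp, adjoint_comp, hP', hA', ← ContinuousLinearMap.comp_assoc]
  -- orthogonal identity
  have horthEq : (Sᗮ ⊔ N)ᗮ = S ⊓ Nᗮ := by
    rw [← Submodule.inf_orthogonal, Submodule.orthogonal_orthogonal]
  -- closure of range of adjoint
  have hclos : (LinearMap.range ((adjoint (P ∘L A ∘L P) : H →L[ℂ] H) : H →ₗ[ℂ] H)).topologicalClosure = S ⊓ Nᗮ := by
    rw [hadj, ← Submodule.orthogonal_orthogonal_eq_closure,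
      aux_orth_range _ (isSelfAdjoint_iff'.mpr hadj), hkerPAP, horthEq]
  have hQle : LinearMap.range (Q : H →ₗ[ℂ] H) ≤ S ⊓ Nᗮ := hclos ▸ hQrange
  -- Q fixes S ⊓ Nᗮ
  have hQfix : ∀ m ∈ S ⊓ Nᗮ, Q m = m := by
    intro m hm
    have h1 : (P ∘L A ∘L P) (Q m) = (P ∘L A ∘L P) m := by
      have h2 := congrArg (fun f : H →L[ℂ] H => f m) hQsol
      simp only [ContinuousLinearMap.comp_apply] at h2 ⊢
      rw [h2, hPfix m hm.1]
    have h2 : Q m - m ∈ LinearMap.ker ((P ∘L A ∘L P : H →L[ℂ] H) : H →ₗ[ℂ] H) := by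
      have : (P ∘L A ∘L P) (Q m - m) = 0 := by rw [map_sub, h1, sub_self]
      exact this
    rw [hkerPAP] at h2
    have h3 : Q m - m ∈ S ⊓ Nᗮ :=
      Submodule.sub_mem _ (hQle (LinearMap.mem_range_self _ m)) hm
    rw [← horthEq] at h3
    have h4 : ⟪(Q m - m : H), Q m - m⟫_ℂ = 0 :=
      (Submodule.mem_orthogonal _ _).mp h3 _ h2
    have h5 : Q m - m = 0 := inner_self_eq_zero.mp h4
    exact sub_eq_zero.mp h5
  -- Q is idempotent
  have hQQ : Q ∘L Q = Q := by
    ext x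
    exact hQfix (Q x) (hQle (LinearMap.mem_range_self _ x))
  -- range of Q
  have hQr : LinearMap.range (Q : H →ₗ[ℂ] H) = S ⊓ Nᗮ := by
    apply le_antisymm hQle
    intro m hm
    exact ⟨m, hQfix m hm⟩
  refine ⟨hQQ, hQr, hQker', ?_⟩
  -- R = Q + PN
  have hNleS : N ≤ S := inf_le_left
  have hNle : N ≤ Sᗮ.comap (A : H →ₗ[ℂ] H) := by
    intro n hn
    have : A n = 0 := hn.2
    show A n ∈ Sᗮ
    rw [this]; exact Submodule.zero_mem _
  ext x
  have hx : x ∈ S ⊔ Sᗮ.comap (A : H →ₗ[ℂ] H) := hcompat ▸ Submodule.mem_top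
  rw [Submodule.mem_sup] at hx
  obtain ⟨s, hs, y, hy, rfl⟩ := hx
  have hPNs : PN s ∈ N := hNr ▸ LinearMap.mem_range_self _ s
  have hPNy : PN y ∈ N := hNr ▸ LinearMap.mem_range_self _ y
  have hPNPN : ∀ z : H, PN (z - PN z) = 0 := by
    intro z
    rw [map_sub, aux_idem_fix PN hNi (x := PN z) (LinearMap.mem_range_self _ z), sub_self]
  have hsm : s - PN s ∈ S ⊓ Nᗮ := by
    refine ⟨Submodule.sub_mem _ hs (hNleS hPNs), ?_⟩
    rw [← hkerPN]
    exact hPNPN s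
  have hQs : Q s = s - PN s := by
    have h1 := hQfix _ hsm
    have h2 : Q (PN s) = 0 := hQzero _ (hNle hPNs)
    rw [map_sub, h2, sub_zero] at h1
    exact h1
  have hQy : Q y = 0 := hQzero y hy
  have hRy0 : R (y - PN y) = 0 := by
    have hmem : y - PN y ∈ LinearMap.ker (R : H →ₗ[ℂ] H) := by
      rw [hRk]
      refine ⟨Submodule.sub_mem _ hy (hNle hPNy), ?_⟩
      rw [← hkerPN]
      exact hPNPN y
    exact hmem
  have hy' : y = PN y + (y - PN y) := by abel
  have lhs : R (s + y) = s + PN y := by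
    conv_lhs => rw [hy']
    rw [map_add, map_add, hRfix s hs, hRfix _ (hNleS hPNy), hRy0, add_zero]
  have rhs : (Q + PN) (s + y) = s + PN y := by
    rw [ContinuousLinearMap.add_apply, map_add, map_add, hQs, hQy, add_zero]
    abel
  rw [lhs, rhs]
end

section
/- Let A be a bounded positive operator on H and S a closed subspace with orthogonal projection P such that R(PAP) is closed and (A,S) is compatible. Then the reduced solution Q of (PAP)X = PA is given by Q = (PAP)† PA = (A^{1/2}P)† A^{1/2}, where † denotes the Moore–Penrose pseudoinverse. -/
open scoped InnerProductSpace
open ContinuousLinearMap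

/-- `D` is the Moore–Penrose pseudoinverse of `C` (the four Penrose conditions,
with self-adjointness of `CD` and `DC`). -/
def IsMoorePenroseInverse {H : Type*} [NormedAddCommGroup H] [InnerProductSpace ℂ H]
    [CompleteSpace H] (C D : H →L[ℂ] H) : Prop :=
  C ∘L D ∘L C = C ∧ D ∘L C ∘L D = D ∧
    IsSelfAdjoint (C ∘L D) ∧ IsSelfAdjoint (D ∘L C)

/-- If `R(PAP)` is closed and `(A, S)` is compatible, the reduced solution `Q` of
`(PAP)X = PA` is given by `Q = (PAP)† (PA) = (A^{1/2} P)† A^{1/2}`, where `sq = A^{1/2}`. -/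
theorem reduced_solution_eq_pseudoinverse_formula {H : Type*} [NormedAddCommGroup H]
    [InnerProductSpace ℂ H] [CompleteSpace H] (A sq P Q D₁ D₂ : H →L[ℂ] H)
    (hA : A.IsPositive) (hsq : sq.IsPositive) (hsq2 : sq ∘L sq = A)
    (S : Submodule ℂ H) (hS : IsClosed (S : Set H))
    (hP : IsSelfAdjoint P ∧ P ∘L P = P ∧ LinearMap.range (P : H →ₗ[ℂ] H) = S)
    (hclosed : IsClosed ((LinearMap.range ((P ∘L A ∘L P : H →L[ℂ] H) : H →ₗ[ℂ] H) : Submodule ℂ H) : Set H))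
    (hcompat : S ⊔ Sᗮ.comap (A : H →ₗ[ℂ] H) = ⊤)
    (hQsol : (P ∘L A ∘L P) ∘L Q = P ∘L A)
    (hQrange : LinearMap.range (Q : H →ₗ[ℂ] H) ≤
      (LinearMap.range ((adjoint (P ∘L A ∘L P) : H →L[ℂ] H) : H →ₗ[ℂ] H)).topologicalClosure)
    (hQker : LinearMap.ker (Q : H →ₗ[ℂ] H) = LinearMap.ker ((P ∘L A : H →L[ℂ] H) : H →ₗ[ℂ] H))
    (hD₁ : IsMoorePenroseInverse (P ∘L A ∘L P) D₁)
    (hD₂ : IsMoorePenroseInverse (sq ∘L P) D₂) :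
    Q = D₁ ∘L (P ∘L A) ∧ Q = D₂ ∘L sq := by
  obtain ⟨hPsa, hPP, hPrange⟩ := hP
  have hP' : adjoint P = P := isSelfAdjoint_iff'.mp hPsa
  have hA' : adjoint A = A := isSelfAdjoint_iff'.mp hA.isSelfAdjoint
  have hsq' : adjoint sq = sq := isSelfAdjoint_iff'.mp hsq.isSelfAdjoint
  set T : H →L[ℂ] H := P ∘L A ∘L P with hTdef
  have hT : adjoint T = T := by
    simp only [hTdef, adjoint_comp, hP', hA', comp_assoc]
  obtain ⟨hD₁1, hD₁2, hD₁3, hD₁4⟩ := hD₁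
  obtain ⟨hD₂1, hD₂2, hD₂3, hD₂4⟩ := hD₂
  have hE : adjoint (D₁ ∘L T) = D₁ ∘L T := isSelfAdjoint_iff'.mp hD₁4
  have hET : (D₁ ∘L T) ∘L T = T := by
    have h : (D₁ ∘L T) ∘L T = adjoint (T ∘L (D₁ ∘L T)) := by
      rw [adjoint_comp, hE, hT]
    rw [h, hD₁1, hT]
  have hrange : LinearMap.range (Q : H →ₗ[ℂ] H) ≤ LinearMap.range (T : H →ₗ[ℂ] H) := by
    rw [hT] at hQrange
    rwa [hclosed.submodule_topologicalClosure_eq] at hQrange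
  have hEQ : (D₁ ∘L T) ∘L Q = Q := by
    ext x
    obtain ⟨y, hy⟩ := hrange ⟨x, rfl⟩
    have h := congrFun (congrArg DFunLike.coe hET) y
    simp only [comp_apply] at h ⊢
    simp only [coe_coe] at hy
    rw [← hy]
    exact h
  have h1 : Q = D₁ ∘L (P ∘L A) := by
    rw [← hQsol, ← comp_assoc, hEQ]
  refine ⟨h1, ?_⟩
  set B : H →L[ℂ] H := sq ∘L P with hBdef
  have hB' : adjoint B = P ∘L sq := by rw [hBdef, adjoint_comp, hP', hsq']
  have hBB : adjoint B ∘L B = T := by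
    rw [hB', hBdef, hTdef, ← hsq2]
    rfl
  have hF : adjoint (D₂ ∘L B) = D₂ ∘L B := isSelfAdjoint_iff'.mp hD₂4
  have hFB : (D₂ ∘L B) ∘L adjoint B = adjoint B := by
    have h : (D₂ ∘L B) ∘L adjoint B = adjoint (B ∘L (D₂ ∘L B)) := by
      conv_rhs => rw [adjoint_comp, hF]
    rw [h, hD₂1]
  have hFT : (D₂ ∘L B) ∘L T = T := by
    rw [← hBB, ← comp_assoc, hFB]
  have hFQ : (D₂ ∘L B) ∘L Q = Q := by
    ext x
    obtain ⟨y, hy⟩ := hrange ⟨x, rfl⟩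
    have h := congrFun (congrArg DFunLike.coe hFT) y
    simp only [comp_apply] at h ⊢
    simp only [coe_coe] at hy
    rw [← hy]
    exact h
  have h3 : adjoint (B ∘L D₂) = B ∘L D₂ := isSelfAdjoint_iff'.mp hD₂3
  have hD₂eq : D₂ = (D₂ ∘L adjoint D₂) ∘L adjoint B := by
    have h : (D₂ ∘L adjoint D₂) ∘L adjoint B = D₂ ∘L adjoint (B ∘L D₂) := by
      conv_rhs => rw [adjoint_comp]
      rfl
    rw [h, h3, hD₂2]
  have hBsq : adjoint B ∘L sq = P ∘L A := by
    rw [hB', comp_assoc, hsq2]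
  calc Q = (D₂ ∘L B) ∘L Q := hFQ.symm
  _ = ((D₂ ∘L adjoint D₂) ∘L adjoint B) ∘L (B ∘L Q) := by
      rw [← hD₂eq]
      rfl
  _ = (D₂ ∘L adjoint D₂) ∘L ((adjoint B ∘L B) ∘L Q) := rfl
  _ = (D₂ ∘L adjoint D₂) ∘L (P ∘L A) := by rw [hBB, hQsol]
  _ = ((D₂ ∘L adjoint D₂) ∘L adjoint B) ∘L sq := by
      conv_rhs => rw [comp_assoc, hBsq]
  _ = D₂ ∘L sq := by rw [← hD₂eq]
end

section
/- Let A be a bounded positive operator on a Hilbert space H and let K be the closure of R(A). Then the map x ↦ Ax from K (with the inner product (x,y)_A = ⟨Ax,y⟩) into R(A^{1/2}) (with the inner product ⟨A^{1/2}u, A^{1/2}v⟩_{A^{1/2}} = ⟨P_K u, P_K v⟩) is an isometry with dense image. -/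
open scoped InnerProductSpace
open ContinuousLinearMap

/-- Let `K = closure R(A)` and `P` the orthogonal projection onto `K`.  The map
`x ↦ Ax` from `(K, (·,·)_A)` to `B(A^{1/2}) = (R(A^{1/2}), ⟨·,·⟩_{A^{1/2}})` is an
isometry (it preserves inner products: since `Ax = A^{1/2}(A^{1/2}x)`, the range inner
product of `Ax, Ay` is `⟪P(A^{1/2}x), P(A^{1/2}y)⟫`, which equals `(x,y)_A = ⟪Ax, y⟫`)
with dense image (every `u = A^{1/2}z ∈ R(A^{1/2})` is approximated in the range norm
`‖A^{1/2}w‖_{A^{1/2}} = ‖Pw‖` by elements `Ax`, `x ∈ K`).  Here `sq = A^{1/2}`. -/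
theorem mul_isometry_dense_range {H : Type*} [NormedAddCommGroup H]
    [InnerProductSpace ℂ H] [CompleteSpace H] (A sq P : H →L[ℂ] H)
    (hA : A.IsPositive) (hsq : sq.IsPositive) (hsq2 : sq ∘L sq = A)
    (hP : IsSelfAdjoint P ∧ P ∘L P = P ∧
      LinearMap.range (P : H →ₗ[ℂ] H) = (LinearMap.range (A : H →ₗ[ℂ] H)).topologicalClosure) :
    (∀ x ∈ (LinearMap.range (A : H →ₗ[ℂ] H)).topologicalClosure,
      ∀ y ∈ (LinearMap.range (A : H →ₗ[ℂ] H)).topologicalClosure,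
        ⟪P (sq x), P (sq y)⟫_ℂ = ⟪A x, y⟫_ℂ) ∧
    (∀ z : H, ∀ ε > (0 : ℝ), ∃ x ∈ (LinearMap.range (A : H →ₗ[ℂ] H)).topologicalClosure,
      ∃ w : H, sq w = sq z - A x ∧ ‖P w‖ < ε) := by
  obtain ⟨hPsa, hPP, hPrange⟩ := hP
  have hsqsa : ContinuousLinearMap.adjoint sq = sq :=
    ContinuousLinearMap.isSelfAdjoint_iff'.mp hsq.isSelfAdjoint
  -- inner product moves across sq
  have hsq_inner : ∀ a b : H, ⟪sq a, b⟫_ℂ = ⟪a, sq b⟫_ℂ := by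
    intro a b
    conv_lhs => rw [← hsqsa]
    rw [ContinuousLinearMap.adjoint_inner_left]
  -- every sq v lies in the closure of range A
  have hmem : ∀ v : H, sq v ∈ (LinearMap.range (A : H →ₗ[ℂ] H)).topologicalClosure := by
    intro v
    rw [← Submodule.orthogonal_orthogonal_eq_closure]
    rw [Submodule.mem_orthogonal]
    intro w hw
    have hAw : ⟪A w, w⟫_ℂ = 0 := hw (A w) ⟨w, rfl⟩
    have hsqw : sq w = 0 := by
      have h1 : ⟪sq w, sq w⟫_ℂ = 0 := by
        rw [hsq_inner, ← ContinuousLinearMap.comp_apply, hsq2]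
        rw [← inner_conj_symm, hAw, map_zero]
      exact inner_self_eq_zero.mp h1
    rw [← hsq_inner, hsqw, inner_zero_left]
  -- P fixes elements of range P
  have hPfix : ∀ u, u ∈ (LinearMap.range (A : H →ₗ[ℂ] H)).topologicalClosure → P u = u := by
    intro u hu
    rw [← hPrange] at hu
    obtain ⟨v, rfl⟩ := hu
    change P (P v) = P v; rw [← ContinuousLinearMap.comp_apply, hPP]
  have hAsa : ContinuousLinearMap.adjoint A = A :=
    ContinuousLinearMap.isSelfAdjoint_iff'.mp hA.isSelfAdjoint
  have hA_inner : ∀ a b : H, ⟪A a, b⟫_ℂ = ⟪a, A b⟫_ℂ := by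
    intro a b
    conv_lhs => rw [← hAsa]
    rw [ContinuousLinearMap.adjoint_inner_left]
  constructor
  · intro x _ y _
    rw [hPfix _ (hmem x), hPfix _ (hmem y), hsq_inner, ← ContinuousLinearMap.comp_apply,
      hsq2, ← hA_inner]
  · intro z ε hε
    have hPz : P z ∈ (LinearMap.range (A : H →ₗ[ℂ] H)).topologicalClosure := by
      rw [← hPrange]; exact ⟨z, rfl⟩
    have hPz' : P z ∈ closure ((LinearMap.range (A : H →ₗ[ℂ] H) : Submodule ℂ H) : Set H) := by
      rw [← Submodule.topologicalClosure_coe]; exact hPz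
    obtain ⟨u, hu, hdist⟩ := Metric.mem_closure_iff.mp hPz' ε hε
    obtain ⟨v, rfl⟩ := hu
    refine ⟨P (sq v), ?_, z - sq (P (sq v)), ?_, ?_⟩
    · rw [← hPrange]; exact ⟨sq v, rfl⟩
    · rw [map_sub, ← ContinuousLinearMap.comp_apply sq sq, hsq2]
    · have hfix : P (sq v) = sq v := hPfix _ (hmem v)
      rw [hfix, map_sub, hPfix _ (hmem (sq v))]
      have : A v = sq (sq v) := by rw [← ContinuousLinearMap.comp_apply, hsq2]
      rw [← this]
      simpa [dist_eq_norm] using hdist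
end

section
/- Let A be a bounded positive operator on H and B ∈ L(H). There exists a bounded operator B̃ on the Hilbert space B(A^{1/2}) = (R(A^{1/2}), ⟨·,·⟩_{A^{1/2}}) satisfying B̃(Ax) = A(Bx) for all x ∈ H if and only if B(N(A)) ⊆ N(A) and R(B* A^{1/2}) ⊆ R(A^{1/2}). In this case B̃ is unique. -/
open scoped InnerProductSpace
open ContinuousLinearMap

/-- `Bt` is a bounded operator on the operator-range Hilbert space
`B(A^{1/2}) = (R(A^{1/2}), ⟨·,·⟩_{A^{1/2}})` satisfying `Bt (A x) = A (B x)`: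
it maps `R(A^{1/2})` to itself, is additive and homogeneous there, is bounded for the
range norm `‖A^{1/2}z‖_{A^{1/2}} = ‖Pz‖` (`P` the orthogonal projection onto `N(A)^⊥`),
and intertwines `A` and `B`.  Here `sq = A^{1/2}`. -/
def IsBoundedExtension {H : Type*} [NormedAddCommGroup H] [InnerProductSpace ℂ H]
    (A sq P B : H →L[ℂ] H) (Bt : H → H) : Prop :=
  (∀ u ∈ LinearMap.range (sq : H →ₗ[ℂ] H), Bt u ∈ LinearMap.range (sq : H →ₗ[ℂ] H)) ∧
  (∀ u ∈ LinearMap.range (sq : H →ₗ[ℂ] H), ∀ v ∈ LinearMap.range (sq : H →ₗ[ℂ] H), Bt (u + v) = Bt u + Bt v) ∧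
  (∀ c : ℂ, ∀ u ∈ LinearMap.range (sq : H →ₗ[ℂ] H), Bt (c • u) = c • Bt u) ∧
  (∃ C : ℝ, 0 < C ∧ ∀ z : H, ∃ z' : H, sq z' = Bt (sq z) ∧ ‖P z'‖ ≤ C * ‖P z‖) ∧
  (∀ x : H, Bt (A x) = A (B x))

section Aux

variable {H : Type*} [NormedAddCommGroup H] [InnerProductSpace ℂ H] [CompleteSpace H]

/-- Shmul'yan-type criterion: if `|⟨u, x⟩| ≤ C ‖sq x‖` for all `x`, with `sq` self-adjoint,
then `u ∈ R(sq)`. -/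
lemma aux_mem_range_of_bound (sq : H →L[ℂ] H) (hsa : adjoint sq = sq)
    (u : H) (C : ℝ) (h : ∀ x : H, ‖(inner ℂ u x : ℂ)‖ ≤ C * ‖sq x‖) :
    u ∈ LinearMap.range (sq : H →ₗ[ℂ] H) := by
  classical
  have hwd : ∀ x x' : H, sq x = sq x' → (inner ℂ u x : ℂ) = inner ℂ u x' := by
    intro x x' hxx
    have h0 : ‖(inner ℂ u (x - x') : ℂ)‖ ≤ C * ‖sq (x - x')‖ := h _
    rw [map_sub, hxx, sub_self, norm_zero, mul_zero] at h0
    have h1 : (inner ℂ u (x - x') : ℂ) = 0 := norm_le_zero_iff.mp h0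
    rw [inner_sub_right, sub_eq_zero] at h1
    exact h1
  set S : Submodule ℂ H := LinearMap.range (sq : H →ₗ[ℂ] H) with hS
  have hv : ∀ v : S, ∃ x : H, sq x = (v : H) := fun v => v.2
  set g0 : S → ℂ := fun v => inner ℂ u (Classical.choose (hv v)) with hg0def
  have hg0 : ∀ (v : S) (x : H), sq x = (v : H) → g0 v = inner ℂ u x := by
    intro v x hx
    exact hwd _ _ ((Classical.choose_spec (hv v)).trans hx.symm)
  have hadd : ∀ v w : S, g0 (v + w) = g0 v + g0 w := by
    intro v w
    obtain ⟨x, hx⟩ := hv v; obtain ⟨y, hy⟩ := hv w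
    rw [hg0 v x hx, hg0 w y hy,
      hg0 (v + w) (x + y) (by rw [map_add, hx, hy]; rfl), inner_add_right]
  have hsmul : ∀ (c : ℂ) (v : S), g0 (c • v) = c • g0 v := by
    intro c v
    obtain ⟨x, hx⟩ := hv v
    rw [hg0 v x hx, hg0 (c • v) (c • x) (by rw [map_smul, hx]; rfl), inner_smul_right]
    simp
  let g1 : S →ₗ[ℂ] ℂ :=
    { toFun := g0, map_add' := hadd, map_smul' := hsmul }
  have hbound : ∀ v : S, ‖g1 v‖ ≤ C * ‖v‖ := by
    intro v
    obtain ⟨x, hx⟩ := hv v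
    have h1 : g1 v = inner ℂ u x := hg0 v x hx
    rw [h1]
    calc ‖(inner ℂ u x : ℂ)‖ ≤ C * ‖sq x‖ := h x
      _ = C * ‖v‖ := by rw [hx]; rfl
  let g2 : S →L[ℂ] ℂ := g1.mkContinuous C hbound
  obtain ⟨G, hG, -⟩ := exists_extension_norm_eq S g2
  set w₀ := (InnerProductSpace.toDual ℂ H).symm G with hw
  refine ⟨w₀, ?_⟩
  refine ext_inner_right ℂ fun x => ?_
  have h1 : (inner ℂ (sq w₀) x : ℂ) = inner ℂ w₀ (sq x) := by
    conv_lhs => rw [← hsa]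
    exact adjoint_inner_left sq x w₀
  have h2 : (inner ℂ w₀ (sq x) : ℂ) = G (sq x) := InnerProductSpace.toDual_symm_apply
  have h3 : G (sq x) = g2 ⟨sq x, ⟨x, rfl⟩⟩ := hG ⟨sq x, ⟨x, rfl⟩⟩
  have h4 : g2 ⟨sq x, ⟨x, rfl⟩⟩ = inner ℂ u x := hg0 ⟨sq x, ⟨x, rfl⟩⟩ x rfl
  rw [ContinuousLinearMap.coe_coe, h1, h2, h3, h4]

end Aux

/-- There is a bounded operator `B̃` on `B(A^{1/2})` with `B̃(Ax) = A(Bx)` iff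
`B(N(A)) ⊆ N(A)` and `R(B* A^{1/2}) ⊆ R(A^{1/2})`; in this case `B̃` is unique
(on `R(A^{1/2})`). -/
theorem exists_bounded_extension_iff {H : Type*} [NormedAddCommGroup H]
    [InnerProductSpace ℂ H] [CompleteSpace H] (A sq P B : H →L[ℂ] H)
    (hA : A.IsPositive) (hsq : sq.IsPositive) (hsq2 : sq ∘L sq = A)
    (hP : IsSelfAdjoint P ∧ P ∘L P = P ∧
      LinearMap.range (P : H →ₗ[ℂ] H) = (LinearMap.ker (A : H →ₗ[ℂ] H))ᗮ) :
    ((∃ Bt : H → H, IsBoundedExtension A sq P B Bt) ↔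
      ((LinearMap.ker (A : H →ₗ[ℂ] H)).map (B : H →ₗ[ℂ] H) ≤ LinearMap.ker (A : H →ₗ[ℂ] H) ∧
        LinearMap.range (((adjoint B) ∘L sq : H →L[ℂ] H) : H →ₗ[ℂ] H) ≤ LinearMap.range (sq : H →ₗ[ℂ] H))) ∧
    (∀ Bt₁ Bt₂ : H → H, IsBoundedExtension A sq P B Bt₁ →
      IsBoundedExtension A sq P B Bt₂ →
      ∀ u ∈ LinearMap.range (sq : H →ₗ[ℂ] H), Bt₁ u = Bt₂ u) := by
  classical
  obtain ⟨hPsa, hPP, hPrange⟩ := hP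
  have hsqsa : adjoint sq = sq := by rw [← star_eq_adjoint]; exact hsq.isSelfAdjoint
  have hPsa' : adjoint P = P := by rw [← star_eq_adjoint]; exact hPsa
  have hPPapp : ∀ x : H, P (P x) = P x := fun x => by
    have := DFunLike.congr_fun hPP x
    simpa [ContinuousLinearMap.comp_apply] using this
  have hAapp : ∀ x : H, A x = sq (sq x) := fun x => by
    rw [← hsq2]; rfl
  -- kernels of `sq` and `A` coincide
  have hA0 : ∀ v : H, sq v = 0 → A v = 0 := by
    intro v hv; rw [hAapp, hv, map_zero]
  have hsq0 : ∀ v : H, A v = 0 → sq v = 0 := by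
    intro v hv
    have h1 : (inner ℂ (sq v) (sq v) : ℂ) = inner ℂ v (A v) := by
      have h0 := adjoint_inner_left sq (sq v) v
      rw [hsqsa] at h0
      rw [h0, hAapp]
    rw [hv, inner_zero_right] at h1
    exact inner_self_eq_zero.mp h1
  -- `P` kills the kernel of `A`
  have hkerP : ∀ x : H, A x = 0 → P x = 0 := by
    intro x hx
    have h1 : (inner ℂ (P x) (P x) : ℂ) = inner ℂ x (P (P x)) := by
      have h0 := adjoint_inner_left P (P x) x
      rwa [hPsa'] at h0
    have h2 : P x ∈ (LinearMap.ker (A : H →ₗ[ℂ] H))ᗮ := hPrange ▸ ⟨x, rfl⟩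
    have h3 : (inner ℂ x (P x) : ℂ) = 0 :=
      (Submodule.mem_orthogonal _ _).mp h2 x (LinearMap.mem_ker.mpr hx)
    rw [hPPapp, h3] at h1
    exact inner_self_eq_zero.mp h1
  have hPeq : ∀ z z' : H, sq z = sq z' → P z = P z' := by
    intro z z' h
    have h1 : sq (z - z') = 0 := by rw [map_sub, h, sub_self]
    have h2 : P (z - z') = 0 := hkerP _ (hA0 _ h1)
    rw [map_sub, sub_eq_zero] at h2
    exact h2
  -- `P` fixes the range of `sq`
  have hPsqx : ∀ x : H, P (sq x) = sq x := by
    intro x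
    have hmem : sq x ∈ (LinearMap.ker (A : H →ₗ[ℂ] H))ᗮ := by
      rw [Submodule.mem_orthogonal]
      intro k hk
      have hk0 : sq k = 0 := hsq0 k (LinearMap.mem_ker.mp hk)
      calc (inner ℂ k (sq x) : ℂ) = inner ℂ k (adjoint sq x) := by rw [hsqsa]
        _ = inner ℂ (sq k) x := by rw [← adjoint_inner_left, adjoint_adjoint]
        _ = 0 := by rw [hk0, inner_zero_left]
    rw [← hPrange] at hmem
    obtain ⟨v, hv⟩ := hmem
    rw [← hv, ContinuousLinearMap.coe_coe, hPPapp]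
  -- `sq ∘ P = sq`
  have hsqP : ∀ w : H, sq (P w) = sq w := by
    intro w
    have hmem : w - P w ∈ (LinearMap.range (P : H →ₗ[ℂ] H))ᗮ := by
      rw [Submodule.mem_orthogonal]
      rintro u ⟨v, rfl⟩
      have h0 := adjoint_inner_left P (w - P w) v
      rw [hPsa'] at h0
      rw [ContinuousLinearMap.coe_coe, h0, map_sub, hPPapp, sub_self, inner_zero_right]
    rw [hPrange, Submodule.orthogonal_orthogonal] at hmem
    have h1 : sq (w - P w) = 0 := hsq0 _ (LinearMap.mem_ker.mp hmem)
    rw [map_sub, sub_eq_zero] at h1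
    exact h1.symm
  -- `sq` is injective on the range of `P`
  have hinjP : ∀ u v : H, u ∈ LinearMap.range (P : H →ₗ[ℂ] H) → v ∈ LinearMap.range (P : H →ₗ[ℂ] H) →
      sq u = sq v → u = v := by
    intro u v hu hv h
    have h1 : u - v ∈ LinearMap.ker (A : H →ₗ[ℂ] H) :=
      LinearMap.mem_ker.mpr (hA0 _ (by rw [map_sub, h, sub_self]))
    have h2 : u - v ∈ (LinearMap.ker (A : H →ₗ[ℂ] H))ᗮ := hPrange ▸ Submodule.sub_mem _ hu hv
    have h3 : (inner ℂ (u - v) (u - v) : ℂ) = 0 :=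
      (Submodule.mem_orthogonal _ _).mp h2 (u - v) h1
    have := inner_self_eq_zero.mp h3
    rwa [sub_eq_zero] at this
  constructor
  · constructor
    · -- existence implies the two conditions
      rintro ⟨Bt, hmem, haddBt, hsmulBt, ⟨C, hC, hbd⟩, hint⟩
      have h0 : Bt 0 = 0 := by
        have := hsmulBt 0 0 ⟨0, map_zero sq⟩
        simpa using this
      constructor
      · rintro y hy
        rw [Submodule.mem_map] at hy
        obtain ⟨x, hx, rfl⟩ := hy
        rw [LinearMap.mem_ker] at hx ⊢
        have h1 := hint x
        rw [show A x = 0 from hx, h0] at h1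
        exact h1.symm
      · have hbB : ∀ x : H, ‖sq (B x)‖ ≤ C * ‖sq x‖ := by
          intro x
          obtain ⟨z', hz', hb⟩ := hbd (sq x)
          have h1 : Bt (sq (sq x)) = A (B x) := by rw [← hAapp, hint]
          have h2 : sq z' = sq (sq (B x)) := by rw [hz', h1, hAapp]
          have h3 : P z' = sq (B x) := by rw [hPeq _ _ h2, hPsqx]
          rw [← h3]
          calc ‖P z'‖ ≤ C * ‖P (sq x)‖ := hb
            _ = C * ‖sq x‖ := by rw [hPsqx]
        rintro v ⟨y, rfl⟩
        apply aux_mem_range_of_bound sq hsqsa _ (‖y‖ * C)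
        intro x
        have h1 : (inner ℂ ((adjoint B ∘L sq) y) x : ℂ) = inner ℂ y (sq (B x)) := by
          rw [ContinuousLinearMap.comp_apply, adjoint_inner_left]
          conv_lhs => rw [← hsqsa]
          rw [adjoint_inner_left]
        rw [ContinuousLinearMap.coe_coe, h1]
        calc ‖(inner ℂ y (sq (B x)) : ℂ)‖ ≤ ‖y‖ * ‖sq (B x)‖ := norm_inner_le_norm _ _
          _ ≤ ‖y‖ * (C * ‖sq x‖) :=
            mul_le_mul_of_nonneg_left (hbB x) (norm_nonneg _)
          _ = (‖y‖ * C) * ‖sq x‖ := by ring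
    · -- the two conditions imply existence
      rintro ⟨-, hrange⟩
      have hchoice : ∀ y : H, ∃ w : H, sq w = adjoint B (sq y) := by
        intro y
        obtain ⟨w, hw⟩ := hrange ⟨y, rfl⟩
        exact ⟨w, hw⟩
      set f : H → H := fun y => P (Classical.choose (hchoice y)) with hfdef
      have hfspec : ∀ y : H, sq (f y) = adjoint B (sq y) := fun y =>
        (hsqP _).trans (Classical.choose_spec (hchoice y))
      have hfP : ∀ y : H, f y ∈ LinearMap.range (P : H →ₗ[ℂ] H) := fun y => ⟨_, rfl⟩
      have hfadd : ∀ y₁ y₂ : H, f (y₁ + y₂) = f y₁ + f y₂ := by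
        intro y₁ y₂
        refine hinjP _ _ (hfP _) (Submodule.add_mem _ (hfP _) (hfP _)) ?_
        rw [map_add, hfspec, hfspec, hfspec, map_add, map_add]
      have hfsmul : ∀ (c : ℂ) (y : H), f (c • y) = c • f y := by
        intro c y
        refine hinjP _ _ (hfP _) (Submodule.smul_mem _ _ (hfP _)) ?_
        rw [map_smul, hfspec, hfspec, map_smul, map_smul]
      let Dlin : H →ₗ[ℂ] H :=
        { toFun := f, map_add' := hfadd, map_smul' := hfsmul }
      have hDcont : Continuous Dlin := by
        apply LinearMap.continuous_of_seq_closed_graph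
        intro u x y hu hfu
        have h1 : Filter.Tendsto (fun n => sq (f (u n))) Filter.atTop (nhds (sq y)) :=
          (sq.continuous.tendsto _).comp hfu
        have h2 : (fun n => sq (f (u n))) = fun n => adjoint B (sq (u n)) :=
          funext fun n => hfspec _
        have h3 : Filter.Tendsto (fun n => adjoint B (sq (u n))) Filter.atTop
            (nhds (adjoint B (sq x))) :=
          ((adjoint B).continuous.tendsto _).comp ((sq.continuous.tendsto _).comp hu)
        have h4 : sq y = adjoint B (sq x) := tendsto_nhds_unique (h2 ▸ h1) h3
        have h5 : y ∈ LinearMap.range (P : H →ₗ[ℂ] H) := by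
          have hcl : IsClosed (LinearMap.range (P : H →ₗ[ℂ] H) : Set H) := by
            rw [hPrange]; exact Submodule.isClosed_orthogonal _
          exact hcl.mem_of_tendsto hfu (Filter.Eventually.of_forall fun n => hfP _)
        exact hinjP y (f x) h5 (hfP x) (h4.trans (hfspec x).symm)
      let D : H →L[ℂ] H := ⟨Dlin, hDcont⟩
      have hD : sq ∘L D = adjoint B ∘L sq := ContinuousLinearMap.ext fun y => hfspec y
      set E := adjoint D with hEdef
      have hE : ∀ x : H, E (sq x) = sq (B x) := by
        intro x
        have h1 : adjoint (sq ∘L D) = adjoint (adjoint B ∘L sq) := by rw [hD]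
        rw [adjoint_comp, adjoint_comp, adjoint_adjoint, hsqsa] at h1
        have := DFunLike.congr_fun h1 x
        simpa [ContinuousLinearMap.comp_apply] using this
      set Bt : H → H := fun u =>
        if h : u ∈ LinearMap.range (sq : H →ₗ[ℂ] H) then sq (E (P (Classical.choose h))) else 0
        with hBtdef
      have hBt : ∀ z : H, Bt (sq z) = sq (E (P z)) := by
        intro z
        have hz : sq z ∈ LinearMap.range (sq : H →ₗ[ℂ] H) := ⟨z, rfl⟩
        have h1 : Bt (sq z) = sq (E (P (Classical.choose hz))) := dif_pos hz
        rw [h1, hPeq _ _ (Classical.choose_spec hz)]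
      refine ⟨Bt, ?_, ?_, ?_, ?_, ?_⟩
      · rintro u ⟨z, rfl⟩
        rw [ContinuousLinearMap.coe_coe, hBt]
        exact ⟨_, rfl⟩
      · rintro u ⟨z₁, rfl⟩ v ⟨z₂, rfl⟩
        rw [ContinuousLinearMap.coe_coe, show sq z₁ + sq z₂ = sq (z₁ + z₂) from (map_add sq z₁ z₂).symm,
          hBt, hBt, hBt, map_add, map_add, map_add]
      · rintro c u ⟨z, rfl⟩
        rw [ContinuousLinearMap.coe_coe, show c • sq z = sq (c • z) from (map_smul sq c z).symm,
          hBt, hBt, map_smul, map_smul, map_smul]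
      · refine ⟨‖P‖ * ‖E‖ + 1, by positivity, fun z => ⟨E (P z), (hBt z).symm, ?_⟩⟩
        calc ‖P (E (P z))‖ ≤ ‖P‖ * ‖E (P z)‖ := P.le_opNorm _
          _ ≤ ‖P‖ * (‖E‖ * ‖P z‖) :=
            mul_le_mul_of_nonneg_left (E.le_opNorm _) (norm_nonneg _)
          _ ≤ (‖P‖ * ‖E‖ + 1) * ‖P z‖ := by nlinarith [norm_nonneg (P z)]
      · intro x
        rw [hAapp, hBt, hPsqx, hE, hAapp]
  · -- uniqueness
    intro Bt₁ Bt₂ h₁ h₂ u hu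
    obtain ⟨w, rfl⟩ := hu
    obtain ⟨m₁, a₁, s₁, ⟨C₁, hC₁, b₁⟩, i₁⟩ := h₁
    obtain ⟨m₂, a₂, s₂, ⟨C₂, hC₂, b₂⟩, i₂⟩ := h₂
    set K := ‖sq‖ * (C₁ + C₂) with hK
    have hK0 : 0 ≤ K := mul_nonneg (norm_nonneg _) (by linarith)
    have key : ∀ x : H, ‖Bt₁ (sq w) - Bt₂ (sq w)‖ ≤ K * ‖P w - sq x‖ := by
      intro x
      have hdecomp : sq (w - sq x) + A x = sq w := by
        rw [hAapp, map_sub, sub_add_cancel]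
      have e₁ : Bt₁ (sq w) = Bt₁ (sq (w - sq x)) + A (B x) := by
        rw [← hdecomp, a₁ (sq (w - sq x)) ⟨_, rfl⟩ (A x) ⟨sq x, (hAapp x).symm⟩, i₁]
      have e₂ : Bt₂ (sq w) = Bt₂ (sq (w - sq x)) + A (B x) := by
        rw [← hdecomp, a₂ (sq (w - sq x)) ⟨_, rfl⟩ (A x) ⟨sq x, (hAapp x).symm⟩, i₂]
      obtain ⟨z₁, hz₁, hb₁⟩ := b₁ (w - sq x)
      obtain ⟨z₂, hz₂, hb₂⟩ := b₂ (w - sq x)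
      have hs : sq (P z₁ - P z₂) = Bt₁ (sq (w - sq x)) - Bt₂ (sq (w - sq x)) := by
        rw [map_sub, hsqP, hsqP, hz₁, hz₂]
      have hdiff : Bt₁ (sq w) - Bt₂ (sq w) = sq (P z₁ - P z₂) := by
        rw [e₁, e₂, hs]
        abel
      rw [hdiff]
      calc ‖sq (P z₁ - P z₂)‖ ≤ ‖sq‖ * ‖P z₁ - P z₂‖ := sq.le_opNorm _
        _ ≤ ‖sq‖ * (‖P z₁‖ + ‖P z₂‖) :=
          mul_le_mul_of_nonneg_left (norm_sub_le _ _) (norm_nonneg _)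
        _ ≤ ‖sq‖ * (C₁ * ‖P (w - sq x)‖ + C₂ * ‖P (w - sq x)‖) :=
          mul_le_mul_of_nonneg_left (add_le_add hb₁ hb₂) (norm_nonneg _)
        _ = K * ‖P (w - sq x)‖ := by ring
        _ = K * ‖P w - sq x‖ := by rw [map_sub, hPsqx]
    -- `P w` lies in the closure of the range of `sq`
    have horth : (LinearMap.range (sq : H →ₗ[ℂ] H))ᗮ = LinearMap.ker (sq : H →ₗ[ℂ] H) := by
      ext v
      rw [Submodule.mem_orthogonal, LinearMap.mem_ker]
      constructor
      · intro h
        have h1 := h (sq (sq v)) ⟨sq v, rfl⟩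
        have h2 : (inner ℂ (sq (sq v)) v : ℂ) = inner ℂ (sq v) (sq v) := by
          conv_lhs => rw [show sq (sq v) = adjoint sq (sq v) from by rw [hsqsa]]
          exact adjoint_inner_left sq v (sq v)
        rw [h2] at h1
        exact inner_self_eq_zero.mp h1
      · rintro h u ⟨x, rfl⟩
        calc (inner ℂ (sq x) v : ℂ) = inner ℂ (adjoint sq x) v := by rw [hsqsa]
          _ = inner ℂ x (sq v) := adjoint_inner_left sq v x
          _ = 0 := by rw [show sq v = 0 from h, inner_zero_right]
    have hkerEq : LinearMap.ker (sq : H →ₗ[ℂ] H) = LinearMap.ker (A : H →ₗ[ℂ] H) := by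
      ext v
      rw [LinearMap.mem_ker, LinearMap.mem_ker]
      exact ⟨hA0 v, hsq0 v⟩
    have hclosSub : LinearMap.range (P : H →ₗ[ℂ] H) = (LinearMap.range (sq : H →ₗ[ℂ] H)).topologicalClosure := by
      rw [hPrange, ← hkerEq, ← horth, Submodule.orthogonal_orthogonal_eq_closure]
    have hcl : P w ∈ closure ((LinearMap.range (sq : H →ₗ[ℂ] H) : Submodule ℂ H) : Set H) := by
      have h1 : P w ∈ (LinearMap.range (sq : H →ₗ[ℂ] H)).topologicalClosure := by
        rw [← hclosSub]; exact ⟨w, rfl⟩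
      exact h1
    have hle : ‖Bt₁ (sq w) - Bt₂ (sq w)‖ ≤ 0 := by
      refine le_of_forall_pos_le_add fun ε hε => ?_
      obtain ⟨v, hvmem, hvd⟩ :=
        Metric.mem_closure_iff.mp hcl (ε / (K + 1)) (by positivity)
      obtain ⟨x, rfl⟩ := hvmem
      have hdist : ‖P w - sq x‖ < ε / (K + 1) := by
        rw [← dist_eq_norm]; exact hvd
      calc ‖Bt₁ (sq w) - Bt₂ (sq w)‖ ≤ K * ‖P w - sq x‖ := key x
        _ ≤ (K + 1) * ‖P w - sq x‖ := by nlinarith [norm_nonneg (P w - sq x)]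
        _ ≤ (K + 1) * (ε / (K + 1)) := by
          apply mul_le_mul_of_nonneg_left (le_of_lt hdist) (by linarith)
        _ = ε := by field_simp
        _ ≤ 0 + ε := by linarith
    have := norm_le_zero_iff.mp hle
    rwa [sub_eq_zero] at this
end

section
/- Let A be a bounded positive operator and S a closed subspace of H. In the Hilbert space B(A^{1/2}) = (R(A^{1/2}), ⟨·,·⟩_{A^{1/2}}), the closure of A(S) equals A^{1/2}(closure(A^{1/2}(S))), and its orthogonal complement in B(A^{1/2}) equals S^⊥ ∩ R(A^{1/2}). -/
open scoped InnerProductSpace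
open ContinuousLinearMap

/-- In the operator-range Hilbert space `B(A^{1/2}) = (R(A^{1/2}), ⟨·,·⟩_{A^{1/2}})`,
where `⟪A^{1/2}z, A^{1/2}z'⟫_{A^{1/2}} = ⟪Pz, Pz'⟫` with `P` the orthogonal projection
onto `closure R(A)`, the closure of `A(S)` equals `A^{1/2}(closure(A^{1/2}(S)))` and
its orthogonal complement in `B(A^{1/2})` equals `S^⊥ ∩ R(A^{1/2})`.
Here `sq = A^{1/2}`; membership in the `B(A^{1/2})`-closure and `B(A^{1/2})`-orthogonal
complement of `A(S)` is expressed via representatives. -/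
theorem closure_and_orthocomplement_in_operator_range {H : Type*} [NormedAddCommGroup H]
    [InnerProductSpace ℂ H] [CompleteSpace H] (A sq P : H →L[ℂ] H)
    (hA : A.IsPositive) (hsq : sq.IsPositive) (hsq2 : sq ∘L sq = A)
    (S : Submodule ℂ H) (hS : IsClosed (S : Set H))
    (hP : IsSelfAdjoint P ∧ P ∘L P = P ∧
      LinearMap.range (P : H →ₗ[ℂ] H) = (LinearMap.range (A : H →ₗ[ℂ] H)).topologicalClosure) :
    {u : H | u ∈ LinearMap.range (sq : H →ₗ[ℂ] H) ∧
        ∀ ε > (0 : ℝ), ∃ s ∈ S, ∃ z : H, sq z = u - A s ∧ ‖P z‖ < ε} =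
      (⇑sq) '' (((S.map (sq : H →ₗ[ℂ] H)).topologicalClosure : Submodule ℂ H) : Set H) ∧
    {u : H | u ∈ LinearMap.range (sq : H →ₗ[ℂ] H) ∧
        ∀ s ∈ S, ∀ z z' : H, sq z = u → sq z' = A s → ⟪P z, P z'⟫_ℂ = 0} =
      (Sᗮ : Set H) ∩ (LinearMap.range (sq : H →ₗ[ℂ] H) : Set H) := by
  obtain ⟨hPsa, hPP, hPr⟩ := hP
  -- basic inner product moves
  have hsqi : ∀ x y : H, ⟪sq x, y⟫_ℂ = ⟪x, sq y⟫_ℂ := by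
    intro x y
    conv_lhs => rw [← hsq.isSelfAdjoint.adjoint_eq]
    exact ContinuousLinearMap.adjoint_inner_left sq y x
  have hPi : ∀ x y : H, ⟪P x, y⟫_ℂ = ⟪x, P y⟫_ℂ := by
    intro x y
    conv_lhs => rw [← hPsa.adjoint_eq]
    exact ContinuousLinearMap.adjoint_inner_left P y x
  have hAapp : ∀ x : H, sq (sq x) = A x := by
    intro x; rw [← hsq2]; rfl
  -- α : x ⟂ range A → sq x = 0
  have halpha : ∀ x : H, (∀ y : H, ⟪A y, x⟫_ℂ = 0) → sq x = 0 := by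
    intro x hx
    have : ⟪sq x, sq x⟫_ℂ = 0 := by
      rw [hsqi x (sq x), hAapp, ← inner_conj_symm, hx x, map_zero]
    exact inner_self_eq_zero.mp this
  -- P acts as identity on range P
  have hPid : ∀ v : H, v ∈ LinearMap.range (P : H →ₗ[ℂ] H) → P v = v := by
    rintro v ⟨w, rfl⟩
    calc P (P w) = (P ∘L P) w := rfl
    _ = P w := by rw [hPP]
  have hArange : ∀ y : H, P (A y) = A y := fun y =>
    hPid _ (hPr ▸ (LinearMap.range (A : H →ₗ[ℂ] H)).le_topologicalClosure ⟨y, rfl⟩)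
  -- β : x ⟂ range A → P x = 0, and converse
  have hbeta : ∀ x : H, (∀ y : H, ⟪A y, x⟫_ℂ = 0) → P x = 0 := by
    intro x hx
    have hx' : x ∈ (LinearMap.range (A : H →ₗ[ℂ] H))ᗮ := by
      rw [Submodule.mem_orthogonal]
      rintro v ⟨y, rfl⟩; exact hx y
    have hPx' : P x ∈ ((LinearMap.range (A : H →ₗ[ℂ] H))ᗮ)ᗮ := by
      rw [Submodule.orthogonal_orthogonal_eq_closure]
      exact hPr ▸ ⟨x, rfl⟩
    have : ⟪P x, P x⟫_ℂ = 0 := by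
      rw [hPi, hPid (P x) ⟨x, rfl⟩]
      exact hPx' x hx'
    exact inner_self_eq_zero.mp this
  have hbeta' : ∀ x : H, P x = 0 → ∀ y : H, ⟪A y, x⟫_ℂ = 0 := by
    intro x hx y
    rw [← hArange y, hPi, hx, inner_zero_right]
  -- ker sq ⊆ ker P
  have hker : ∀ x : H, sq x = 0 → P x = 0 := by
    intro x hx
    refine hbeta x fun y => ?_
    rw [← hAapp, hsqi, hx, inner_zero_right]
  -- representatives have the same projection
  have hrep : ∀ z v : H, sq z = sq v → P z = P v := by
    intro z v h
    have h0 : sq (z - v) = 0 := by rw [map_sub, h, sub_self]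
    have := hker _ h0
    rw [map_sub, sub_eq_zero] at this
    exact this
  -- γ : P (sq x) = sq x
  have hgamma : ∀ x : H, P (sq x) = sq x := by
    intro x
    refine hPid _ ?_
    rw [hPr, ← Submodule.orthogonal_orthogonal_eq_closure]
    intro v hv
    have hsqv : sq v = 0 := halpha v fun y => hv (A y) ⟨y, rfl⟩
    rw [← hsqi, hsqv, inner_zero_left]
  -- δ : sq (P x) = sq x
  have hdelta : ∀ x : H, sq (P x) = sq x := by
    intro x
    have h1 : P (P x - x) = 0 := by rw [map_sub, hPid (P x) ⟨x, rfl⟩, sub_self]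
    have h2 := halpha _ (hbeta' _ h1)
    rw [map_sub, sub_eq_zero] at h2
    exact h2
  constructor
  · ext u
    simp only [Set.mem_setOf_eq, Set.mem_image, SetLike.mem_coe]
    constructor
    · rintro ⟨⟨w, rfl⟩, hcond⟩
      refine ⟨P w, ?_, hdelta w⟩
      rw [← SetLike.mem_coe, Submodule.topologicalClosure_coe, Metric.mem_closure_iff]
      intro ε hε
      obtain ⟨s, hs, z, hz, hzn⟩ := hcond ε hε
      refine ⟨sq s, Submodule.mem_map_of_mem hs, ?_⟩
      have h1 : sq (w - sq s) = sq w - A s := by rw [map_sub, hAapp]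
      have h2 : P z = P w - sq s := by
        rw [hrep z (w - sq s) (by rw [hz, h1]; rfl), map_sub, hgamma]
      rw [dist_eq_norm, ← h2]
      exact hzn
    · rintro ⟨v, hv, rfl⟩
      have hvcl : v ∈ closure ((S.map (sq : H →ₗ[ℂ] H) : Set H)) := by
        rwa [← Submodule.topologicalClosure_coe, SetLike.mem_coe]
      have hPv : P v = v := by
        refine hPid v ?_
        have hclosed : IsClosed ((LinearMap.range (P : H →ₗ[ℂ] H) : Set H)) := by
          rw [hPr]; exact (LinearMap.range (A : H →ₗ[ℂ] H)).isClosed_topologicalClosure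
        refine hclosed.closure_subset_iff.mpr ?_ hvcl
        rintro x ⟨y, hy, rfl⟩
        exact ⟨sq y, hgamma y⟩
      refine ⟨⟨v, rfl⟩, ?_⟩
      intro ε hε
      rw [Metric.mem_closure_iff] at hvcl
      obtain ⟨b, hb, hdist⟩ := hvcl ε hε
      obtain ⟨s, hs, rfl⟩ := hb
      refine ⟨s, hs, v - sq s, by rw [map_sub, hAapp], ?_⟩
      rw [map_sub, hPv, hgamma, ← dist_eq_norm]
      exact hdist
  · ext u
    simp only [Set.mem_setOf_eq, Set.mem_inter_iff, SetLike.mem_coe]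
    constructor
    · rintro ⟨⟨w, rfl⟩, hcond⟩
      refine ⟨?_, ⟨w, rfl⟩⟩
      rw [Submodule.mem_orthogonal]
      intro s hs
      have h := hcond s hs w (sq s) rfl (hAapp s)
      rw [hgamma, ← hsqi, hdelta] at h
      rw [← inner_conj_symm]; exact (congrArg (starRingEnd ℂ) h).trans (map_zero _)
    · rintro ⟨hu, ⟨w, rfl⟩⟩
      refine ⟨⟨w, rfl⟩, ?_⟩
      intro s hs z z' hz hz'
      have h1 : P z' = sq s := by
        rw [hrep z' (sq s) (by rw [hz', hAapp]), hgamma]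
      rw [h1, ← hsqi, hdelta, hz, ← inner_conj_symm,
        (Submodule.mem_orthogonal _ _).mp hu s hs, map_zero]
end

section
/- Let A be a bounded positive operator on H, S a closed subspace, and Q the orthogonal projection in the Hilbert space B(A^{1/2}) onto M, the closure of A(S) in B(A^{1/2}). Then the pair (A,S) is compatible (H = S + A^{-1}(S^⊥)) if and only if Q(R(A)) = A(S). -/
open scoped InnerProductSpace
open ContinuousLinearMap

/-- Let `Q` be the orthogonal projection, in the operator-range Hilbert space
`B(A^{1/2}) = (R(A^{1/2}), ⟨·,·⟩_{A^{1/2}})`, onto `M`, the closure of `A(S)` in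
`B(A^{1/2})` (which equals `A^{1/2}(closure(A^{1/2}(S)))`).  `Q` is characterized
pointwise on `R(A^{1/2})` by: `Q u ∈ M` and `u - Q u` is `B(A^{1/2})`-orthogonal to
`A(S)`, the range inner product being `⟪A^{1/2}z, A^{1/2}z'⟫_{A^{1/2}} = ⟪Pz, Pz'⟫`
with `P` the orthogonal projection onto `closure R(A)`.  Then `(A, S)` is compatible
(`H = S + A⁻¹(S^⊥)`) iff `Q(R(A)) = A(S)`.  Here `sq = A^{1/2}`. -/
theorem compatible_iff_projection_image {H : Type*} [NormedAddCommGroup H]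
    [InnerProductSpace ℂ H] [CompleteSpace H] (A sq P : H →L[ℂ] H)
    (hA : A.IsPositive) (hsq : sq.IsPositive) (hsq2 : sq ∘L sq = A)
    (S : Submodule ℂ H) (hS : IsClosed (S : Set H))
    (hP : IsSelfAdjoint P ∧ P ∘L P = P ∧
      LinearMap.range (P : H →ₗ[ℂ] H) = (LinearMap.range (A : H →ₗ[ℂ] H)).topologicalClosure)
    (Q : H → H)
    (hQmem : ∀ u ∈ LinearMap.range (sq : H →ₗ[ℂ] H),
      Q u ∈ (⇑sq) '' (((S.map (sq : H →ₗ[ℂ] H)).topologicalClosure : Submodule ℂ H) : Set H))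
    (hQorth : ∀ u ∈ LinearMap.range (sq : H →ₗ[ℂ] H), ∀ s ∈ S, ∀ z z' : H,
      sq z = u - Q u → sq z' = A s → ⟪P z, P z'⟫_ℂ = 0) :
    (S ⊔ Sᗮ.comap (A : H →ₗ[ℂ] H) = ⊤) ↔
      Q '' (LinearMap.range (A : H →ₗ[ℂ] H) : Set H) = (⇑A) '' (S : Set H) := by
  obtain ⟨hPsa, hPP, hPrange⟩ := hP
  have hsqsym : ∀ x y : H, ⟪sq x, y⟫_ℂ = ⟪x, sq y⟫_ℂ := hsq.1
  have hPsym : ∀ x y : H, ⟪P x, y⟫_ℂ = ⟪x, P y⟫_ℂ := hPsa.isSymmetric.apply_clm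
  have hAx : ∀ x : H, A x = sq (sq x) := by
    intro x; rw [← hsq2]; rfl
  -- range sq ≤ closure range A
  have hrange : LinearMap.range (sq : H →ₗ[ℂ] H) ≤ (LinearMap.range (A : H →ₗ[ℂ] H)).topologicalClosure := by
    rw [← Submodule.orthogonal_orthogonal_eq_closure]
    rintro _ ⟨x, rfl⟩
    intro v hv
    have hAv : sq v = 0 := by
      have h0 : ⟪sq v, sq v⟫_ℂ = 0 := by
        have h := hv (A v) ⟨v, rfl⟩
        rw [hAx, hsqsym (sq v) v] at h
        exact h
      exact inner_self_eq_zero.mp h0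
    calc ⟪v, sq x⟫_ℂ = ⟪sq v, x⟫_ℂ := (hsqsym v x).symm
    _ = 0 := by rw [hAv, inner_zero_left]
  -- P fixes range sq
  have hPfix : ∀ x : H, P (sq x) = sq x := by
    intro x
    obtain ⟨w, hw⟩ : sq x ∈ LinearMap.range (P : H →ₗ[ℂ] H) := by
      rw [hPrange]; exact hrange ⟨x, rfl⟩
    rw [← show P w = sq x from hw, ← ContinuousLinearMap.comp_apply, hPP]
  -- orthogonality in H
  have horth : ∀ u ∈ LinearMap.range (sq : H →ₗ[ℂ] H), ∀ s ∈ S, ⟪u - Q u, s⟫_ℂ = 0 := by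
    intro u hu s hs
    obtain ⟨t, _, hQu⟩ := hQmem u hu
    obtain ⟨a, ha⟩ := id hu
    have hz : sq (a - t) = u - Q u := by rw [map_sub, show sq a = u from ha, hQu]
    have h0 := hQorth u hu s hs (a - t) (sq s) hz (hAx s).symm
    rw [hPfix s] at h0
    calc ⟪u - Q u, s⟫_ℂ = ⟪sq (a - t), s⟫_ℂ := by rw [hz]
    _ = ⟪a - t, sq s⟫_ℂ := hsqsym _ _
    _ = ⟪a - t, P (sq s)⟫_ℂ := by rw [hPfix]
    _ = ⟪P (a - t), sq s⟫_ℂ := (hPsym _ _).symm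
    _ = 0 := h0
  -- uniqueness lemma
  have huniq : ∀ m, m ∈ (⇑sq) '' (((S.map (sq : H →ₗ[ℂ] H)).topologicalClosure : Submodule ℂ H) : Set H) →
      (∀ s ∈ S, ⟪m, s⟫_ℂ = 0) → m = 0 := by
    intro m hm hms
    obtain ⟨t, ht, rfl⟩ := hm
    have htorth : t ∈ (S.map (sq : H →ₗ[ℂ] H))ᗮ := by
      rw [Submodule.mem_orthogonal]
      rintro _ ⟨s, hs, rfl⟩
      have h : ⟪sq t, s⟫_ℂ = 0 := hms s hs
      rw [hsqsym t s] at h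
      rw [← inner_conj_symm]; exact (congrArg (starRingEnd ℂ) h).trans (map_zero _)
    have hcl : t ∈ (S.map (sq : H →ₗ[ℂ] H))ᗮᗮ := by
      have hle : (S.map (sq : H →ₗ[ℂ] H)).topologicalClosure ≤ (S.map (sq : H →ₗ[ℂ] H))ᗮᗮ :=
        Submodule.topologicalClosure_minimal (S.map (sq : H →ₗ[ℂ] H))
          (Submodule.le_orthogonal_orthogonal _) (Submodule.isClosed_orthogonal _)
      exact hle ht
    have ht0 : t = 0 :=
      inner_self_eq_zero.mp (Submodule.inner_right_of_mem_orthogonal htorth hcl)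
    rw [ht0, map_zero]
  -- key: if x = s + w with s ∈ S, A (x - s) ∈ Sᗮ then Q (A x) = A s
  have hkey : ∀ x s : H, s ∈ S → A (x - s) ∈ Sᗮ → Q (A x) = A s := by
    intro x s hs hw
    have huA : A x ∈ LinearMap.range (sq : H →ₗ[ℂ] H) := ⟨sq x, (hAx x).symm⟩
    obtain ⟨t, ht, hQu⟩ := hQmem (A x) huA
    have hd : Q (A x) - A s ∈ (⇑sq) ''
        (((S.map (sq : H →ₗ[ℂ] H)).topologicalClosure : Submodule ℂ H) : Set H) := by
      refine ⟨t - sq s, ?_, by rw [map_sub, hQu, hAx s]⟩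
      exact Submodule.sub_mem _ ht
        (Submodule.le_topologicalClosure _ ⟨s, hs, rfl⟩)
    have hdo : ∀ s' ∈ S, ⟪Q (A x) - A s, s'⟫_ℂ = 0 := by
      intro s' hs'
      have h1 : ⟪Q (A x) - A x, s'⟫_ℂ = 0 := by
        rw [← neg_sub, inner_neg_left, horth (A x) huA s' hs', neg_zero]
      have h2 : ⟪A x - A s, s'⟫_ℂ = 0 := by
        rw [← map_sub, ← inner_conj_symm,
          Submodule.inner_right_of_mem_orthogonal hs' hw, map_zero]
      calc ⟪Q (A x) - A s, s'⟫_ℂ = ⟪(Q (A x) - A x) + (A x - A s), s'⟫_ℂ := by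
            rw [sub_add_sub_cancel]
      _ = ⟪Q (A x) - A x, s'⟫_ℂ + ⟪A x - A s, s'⟫_ℂ := inner_add_left _ _ _
      _ = 0 := by rw [h1, h2, add_zero]
    exact sub_eq_zero.mp (huniq _ hd hdo)
  constructor
  · -- compatible → image equality
    intro hsup
    apply Set.Subset.antisymm
    · rintro _ ⟨_, ⟨x, rfl⟩, rfl⟩
      have hx : x ∈ S ⊔ Sᗮ.comap (A : H →ₗ[ℂ] H) := by rw [hsup]; trivial
      obtain ⟨s, hs, w, hw, rfl⟩ := Submodule.mem_sup.mp hx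
      have hQ : Q (A (s + w)) = A s := by
        refine hkey (s + w) s hs ?_
        simpa using hw
      exact ⟨s, hs, hQ.symm⟩
    · rintro _ ⟨s, hs, rfl⟩
      refine ⟨A s, ⟨s, rfl⟩, ?_⟩
      have : Q (A s) = A s := by
        refine hkey s s hs ?_
        simp
      exact this
  · -- image equality → compatible
    intro himg
    rw [eq_top_iff]
    intro x _
    have hmem : Q (A x) ∈ (⇑A) '' (S : Set H) := by
      rw [← himg]; exact ⟨A x, ⟨x, rfl⟩, rfl⟩
    obtain ⟨s, hs, hQs⟩ := hmem
    have huA : A x ∈ LinearMap.range (sq : H →ₗ[ℂ] H) := ⟨sq x, (hAx x).symm⟩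
    have hxs : x - s ∈ Sᗮ.comap (A : H →ₗ[ℂ] H) := by
      rw [Submodule.mem_comap, Submodule.mem_orthogonal]
      intro v hv
      have h := horth (A x) huA v hv
      rw [← hQs] at h
      rw [map_sub, ← inner_conj_symm]; exact (congrArg (starRingEnd ℂ) h).trans (map_zero _)
    have : x = s + (x - s) := by abel
    rw [this]
    exact Submodule.add_mem_sup hs hxs
end
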